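/- arXiv:math/9807120 — 12 statements merged into one kernel-verified Lean document; each statement's English description precedes it below -/
import Mathlib

section
/- Let A be a group, B a subgroup of A, and let λ, ρ : A → A *_B A be the two canonical homomorphisms of A into the amalgamated free product of A with itself over B. Then dom_A(B) = λ⁻¹(λ(A) ∩ ρ(A)) = ρ⁻¹(λ(A) ∩ ρ(A)); in particular, a ∈ dom_A(B) if and only if λ(a) lies in the image of ρ, if and only if ρ(a) lies in the image of λ. -/
/-!
The two embeddings `λ, ρ : A → A *_B A` form the universal pair of homomorphisms agreeing on `B`,
so the dominion is their equalizer `{a | λ a = ρ a}`. The fold map `A *_B A → A` induced by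
`(id, id)` is a common left inverse of `λ` and `ρ`; hence `λ a = ρ a'` forces `a = a'`, and
`λ a ∈ ρ(A)` already means `λ a = ρ a`.
-/

universe u

def GroupDominion {A : Type u} [Group A] (B : Subgroup A) : Set A :=
  {a : A | ∀ (C : Type u) [Group C], ∀ f g : A →* C,
    (∀ b ∈ B, f b = g b) → f a = g a}

theorem apply_mem_range_iff_of_leftInverse {α β : Type*} {f g : α → β} {k : β → α}
    (hf : Function.LeftInverse k f) (hg : Function.LeftInverse k g) (a : α) :
    f a ∈ Set.range g ↔ g a = f a := by
  refine ⟨?_, fun h => ⟨a, h⟩⟩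
  rintro ⟨a', ha'⟩
  obtain rfl : a' = a := by rw [← hg a', ha', hf a]
  exact ha'

theorem groupDominion_eq_eqLocus {A P : Type u} [Group A] [Group P] {B : Subgroup A}
    {lam rho : A →* P} (hagree : ∀ b ∈ B, lam b = rho b)
    (hfactor : ∀ (C : Type u) [Group C], ∀ f g : A →* C, (∀ b ∈ B, f b = g b) →
      ∃ h : P →* C, h.comp lam = f ∧ h.comp rho = g) :
    GroupDominion B = lam.eqLocus rho := by
  ext a
  refine ⟨fun ha => ha P lam rho hagree, fun (ha : lam a = rho a) C _ f g hfg => ?_⟩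
  obtain ⟨h, rfl, rfl⟩ := hfactor C f g hfg
  exact congrArg h ha

/-- Let `A` be a group, `B` a subgroup of `A`, and `lam, rho : A →* P` the two canonical
homomorphisms of `A` into the amalgamated free product `P = A *_B A` of `A` with itself
over `B` (characterized by its universal property as the pushout of `B ↪ A` along itself).
Then `dom_A(B) = lam⁻¹(lam(A) ∩ rho(A)) = rho⁻¹(lam(A) ∩ rho(A))`; in particular,
`a ∈ dom_A(B)` iff `lam a` lies in the image of `rho`, iff `rho a` lies in the image
of `lam`. -/
theorem dominion_eq_preimage_of_intersection {A : Type u} [Group A] (B : Subgroup A)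
    {P : Type u} [Group P] (lam rho : A →* P)
    (hagree : ∀ b ∈ B, lam b = rho b)
    (huniv : ∀ (C : Type u) [Group C], ∀ f g : A →* C, (∀ b ∈ B, f b = g b) →
      ∃! h : P →* C, h.comp lam = f ∧ h.comp rho = g) :
    GroupDominion B = lam ⁻¹' (Set.range lam ∩ Set.range rho) ∧
    GroupDominion B = rho ⁻¹' (Set.range lam ∩ Set.range rho) ∧
    (∀ a : A, a ∈ GroupDominion B ↔ lam a ∈ Set.range rho) ∧
    (∀ a : A, a ∈ GroupDominion B ↔ rho a ∈ Set.range lam) := by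
  have hdom : ∀ a, a ∈ GroupDominion B ↔ lam a = rho a := fun a => by
    rw [groupDominion_eq_eqLocus hagree fun C _ f g hfg => (huniv C f g hfg).exists]; rfl
  obtain ⟨fold, hfold_lam, hfold_rho⟩ :=
    (huniv A (MonoidHom.id A) (MonoidHom.id A) fun _ _ => rfl).exists
  have hlam : Function.LeftInverse fold lam := DFunLike.congr_fun hfold_lam
  have hrho : Function.LeftInverse fold rho := DFunLike.congr_fun hfold_rho
  have hlam_mem : ∀ a, a ∈ GroupDominion B ↔ lam a ∈ Set.range rho := fun a => by
    rw [hdom, apply_mem_range_iff_of_leftInverse hlam hrho, eq_comm]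
  have hrho_mem : ∀ a, a ∈ GroupDominion B ↔ rho a ∈ Set.range lam := fun a => by
    rw [hdom, apply_mem_range_iff_of_leftInverse hrho hlam]
  refine ⟨?_, ?_, hlam_mem, hrho_mem⟩ <;> ext a
  · rw [hlam_mem, Set.preimage_inter, Set.preimage_range, Set.univ_inter]; rfl
  · rw [hrho_mem, Set.preimage_inter, Set.preimage_range, Set.inter_univ]; rfl
end

section
/- Let 𝒞 be a variety of L-algebras, A ∈ 𝒞, B a subalgebra of A, W a term in a set S of variables, and x = (x_s)_{s∈S} an S-tuple of elements of A. If T₁ and T₂ are subsets of S, each transferable over B with respect to W(x), and their intersection T₁ ∩ T₂ is also transferable over B with respect to W(x), then their union T₁ ∪ T₂ is transferable over B with respect to W(x). In particular, if T₁ ∩ T₂ = ∅ and each of T₁, T₂ is transferable over B with respect to W(x), then so is T₁ ∪ T₂. -/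
open FirstOrder Language

universe u v w x

open Classical in
/-- Transferability of a set of variables. -/
def Transferable {L : FirstOrder.Language.{u, v}} (T : L.Theory) {A : Type w} [L.Structure A]
    (B : L.Substructure A) {S : Type x} (W : L.Term S) (xs : S → A) (t : Set S) : Prop :=
  ∀ S₁ S₂ : Set S, Disjoint S₁ t → Disjoint S₁ S₂ → Disjoint t S₂ →
    S₁ ∪ t ∪ S₂ = Set.univ →
    ∀ (C : Type (max u v w)) [L.Structure C] [T.Model C], ∀ f g : A →[L] C,
      (∀ b ∈ B, f b = g b) →
      Term.realize (fun s => if s ∈ S₁ ∪ t then f (xs s) else g (xs s)) W =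
      Term.realize (fun s => if s ∈ S₁ then f (xs s) else g (xs s)) W

/-- The dominion of a subalgebra `B` of `A` in the variety of models of `T`. -/
def Dominion {L : FirstOrder.Language.{u, v}} (T : L.Theory) {A : Type w} [L.Structure A]
    (B : L.Substructure A) : Set A :=
  {a : A | ∀ (C : Type (max u v w)) [L.Structure C] [T.Model C], ∀ f g : A →[L] C,
    (∀ b ∈ B, f b = g b) → f a = g a}

/-!
A transferable set `t` is one whose variables can all be moved together from the `f`-side to the
`g`-side of a mixed substitution without changing the value of `W`. Viewing the value as a function
`m` of the set `U` of variables substituted through `f`, this says `m (U ∪ t) = m (U \ t)` for every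
`U`. For such set functions the union of `T₁` and `T₂` is handled by moving `T₂` out, moving the
overlap `T₁ ∩ T₂` back in (so that all of `T₁` is on the `f`-side again) and finally moving `T₁` out.
-/

section BlockInvariant

variable {S α : Type*}

def BlockInvariant (m : Set S → α) (t : Set S) : Prop :=
  ∀ U, m (U ∪ t) = m (U \ t)

theorem blockInvariant_empty (m : Set S → α) : BlockInvariant m ∅ := by
  intro U
  rw [Set.union_empty, Set.sdiff_empty]

theorem BlockInvariant.union_of_inter {m : Set S → α} {T₁ T₂ : Set S}
    (h₁ : BlockInvariant m T₁) (h₂ : BlockInvariant m T₂) (hI : BlockInvariant m (T₁ ∩ T₂)) :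
    BlockInvariant m (T₁ ∪ T₂) := by
  intro U
  calc m (U ∪ (T₁ ∪ T₂))
      = m ((U ∪ T₁) ∪ T₂) := by rw [Set.union_assoc]
    _ = m ((U ∪ T₁) \ T₂) := h₂ _
    _ = m (((U ∪ T₁) \ T₂) \ (T₁ ∩ T₂)) := by
        rw [(Set.disjoint_sdiff_left.mono_right Set.inter_subset_right).sdiff_eq_left]
    _ = m (((U ∪ T₁) \ T₂) ∪ (T₁ ∩ T₂)) := (hI _).symm
    _ = m ((U \ T₂) ∪ T₁) := by
        congr 1
        ext s
        simp only [Set.mem_union, Set.mem_sdiff, Set.mem_inter_iff]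
        tauto
    _ = m ((U \ T₂) \ T₁) := h₁ _
    _ = m (U \ (T₁ ∪ T₂)) := by rw [Set.sdiff_sdiff, Set.union_comm]

end BlockInvariant

section Transferable

variable {L : FirstOrder.Language.{u, v}} {A : Type w} [L.Structure A] {S : Type x}
  {C : Type*} [L.Structure C]

open Classical in
/-- The paper's `W^{f,g}_{U,Uᶜ}(x)`. -/
noncomputable def mixedRealize (W : L.Term S) (xs : S → A) (f g : A →[L] C) (U : Set S) : C :=
  W.realize fun s => if s ∈ U then f (xs s) else g (xs s)

theorem realize_ite_eq_mixedRealize (W : L.Term S) (xs : S → A) (f g : A →[L] C) (U : Set S)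
    [DecidablePred (· ∈ U)] :
    W.realize (fun s => if s ∈ U then f (xs s) else g (xs s)) = mixedRealize W xs f g U := by
  unfold mixedRealize
  congr!

theorem transferable_iff_blockInvariant (T : L.Theory) (B : L.Substructure A) (W : L.Term S)
    (xs : S → A) (t : Set S) :
    Transferable T B W xs t ↔
      ∀ (C : Type (max u v w)) [L.Structure C] [T.Model C] (f g : A →[L] C),
        (∀ b ∈ B, f b = g b) → BlockInvariant (mixedRealize W xs f g) t := by
  simp only [Transferable, realize_ite_eq_mixedRealize]
  constructor
  · intro ht C _ _ f g hfg U
    have key := ht (U \ t) (U ∪ t)ᶜ Set.disjoint_sdiff_left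
      (Set.disjoint_compl_right_iff_subset.mpr (Set.sdiff_subset.trans Set.subset_union_left))
      (Set.disjoint_compl_right_iff_subset.mpr Set.subset_union_right)
      (by rw [Set.sdiff_union_self, Set.union_compl_self]) C f g hfg
    rwa [Set.sdiff_union_self] at key
  · intro ht S₁ _ hS₁ _ _ _ C _ _ f g hfg
    have key := ht C f g hfg S₁
    rwa [hS₁.sdiff_eq_left] at key

variable {T : L.Theory} {B : L.Substructure A} {W : L.Term S} {xs : S → A}

theorem transferable_empty : Transferable T B W xs ∅ :=
  (transferable_iff_blockInvariant T B W xs ∅).mpr fun _ _ _ _ _ _ => blockInvariant_empty _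

theorem Transferable.union_of_inter {T₁ T₂ : Set S} (h₁ : Transferable T B W xs T₁)
    (h₂ : Transferable T B W xs T₂) (hI : Transferable T B W xs (T₁ ∩ T₂)) :
    Transferable T B W xs (T₁ ∪ T₂) := by
  rw [transferable_iff_blockInvariant] at *
  exact fun C _ _ f g hfg => (h₁ C f g hfg).union_of_inter (h₂ C f g hfg) (hI C f g hfg)

end Transferable

theorem transferable_union_general {L : FirstOrder.Language.{u, v}} (T : L.Theory) {A : Type w}
    [L.Structure A] (B : L.Substructure A) {S : Type x} (W : L.Term S)
    (xs : S → A) (T₁ T₂ : Set S)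
    (hT₁ : Transferable T B W xs T₁) (hT₂ : Transferable T B W xs T₂) :
    (Transferable T B W xs (T₁ ∩ T₂) → Transferable T B W xs (T₁ ∪ T₂)) ∧
    (T₁ ∩ T₂ = ∅ → Transferable T B W xs (T₁ ∪ T₂)) :=
  ⟨hT₁.union_of_inter hT₂, fun h => hT₁.union_of_inter hT₂ (h ▸ transferable_empty)⟩

/-- If `T₁` and `T₂` are subsets of `S`, each transferable over `B` with respect to
`W(x)`, and their intersection is also transferable, then their union is transferable.
In particular, if `T₁ ∩ T₂ = ∅` and each is transferable, then so is their union. -/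
theorem transferable_union {L : FirstOrder.Language.{u, v}} (T : L.Theory) {A : Type w}
    [L.Structure A] [T.Model A] (B : L.Substructure A) {S : Type x} (W : L.Term S)
    (xs : S → A) (T₁ T₂ : Set S)
    (hT₁ : Transferable T B W xs T₁) (hT₂ : Transferable T B W xs T₂) :
    (Transferable T B W xs (T₁ ∩ T₂) → Transferable T B W xs (T₁ ∪ T₂)) ∧
    (T₁ ∩ T₂ = ∅ → Transferable T B W xs (T₁ ∪ T₂)) :=
  transferable_union_general T B W xs T₁ T₂ hT₁ hT₂
end

section
/- Let 𝒞 be a variety of L-algebras, A ∈ 𝒞, B a subalgebra of A, W a term in a set S of variables, and x = (x_s)_{s∈S} an S-tuple of elements of A. Suppose T₁ and T₂ are disjoint subsets of S, and that both T₁ and T₁ ∪ T₂ are transferable over B with respect to W(x). Suppose further that for every proper subset U of T₁, either U or T₁ ∖ U is transferable over B with respect to W(x). Then T₂ is transferable over B with respect to W(x). -/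
open FirstOrder Language

universe u v w x

/-!
Fix `C`, `f`, `g` and let `R X` be the value of `W` with `f` substituted at the variables in `X`
and `g` at the others; then `t` is transferable iff `R (X ∪ t) = R (X \ t)` for all `X`, and the
argument only concerns such a function `R : Set S → α`. Moving `T₂` into or out of `X` can be
replaced by moving `T₁ ∪ T₂` and then `T₁`, provided `X ∩ T₁` is `∅` or `T₁`. For general `X`,
`U = X ∩ T₁` is a proper subset of `T₁`, and moving `U` out of `X`, or `T₁ \ U` into `X`, reduces
to those two cases.
-/

variable {S α : Type*}

def Transfers (R : Set S → α) (t : Set S) : Prop :=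
  ∀ X, R (X ∪ t) = R (X \ t)

namespace Transfers

variable {R : Set S → α} {t T₁ T₂ X : Set S}

theorem apply_union_of_disjoint (h : Transfers R t) (hX : Disjoint X t) : R (X ∪ t) = R X := by
  rw [h, hX.sdiff_eq_left]

theorem apply_sdiff_of_subset (h : Transfers R t) (hX : t ⊆ X) : R (X \ t) = R X := by
  rw [← h, Set.union_eq_self_of_subset_right hX]

theorem apply_union_eq_apply_sdiff_of_disjoint (h₁ : Transfers R T₁)
    (h₁₂ : Transfers R (T₁ ∪ T₂)) (hd : Disjoint T₁ T₂) (hX : Disjoint X T₁) : R (X ∪ T₂) = R (X \ T₂) :=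
  calc R (X ∪ T₂) = R (X ∪ T₂ ∪ T₁) :=
        (h₁.apply_union_of_disjoint (Set.disjoint_union_left.2 ⟨hX, hd.symm⟩)).symm
    _ = R (X ∪ (T₁ ∪ T₂)) := by rw [Set.union_assoc, Set.union_comm T₂]
    _ = R (X \ (T₁ ∪ T₂)) := h₁₂ X
    _ = R (X \ T₂) := by rw [← Set.sdiff_sdiff, hX.sdiff_eq_left]

theorem apply_union_eq_apply_sdiff_of_subset (h₁ : Transfers R T₁)
    (h₁₂ : Transfers R (T₁ ∪ T₂)) (hd : Disjoint T₁ T₂) (hX : T₁ ⊆ X) : R (X ∪ T₂) = R (X \ T₂) :=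
  calc R (X ∪ T₂) = R (X ∪ (T₁ ∪ T₂)) := by
        rw [← Set.union_assoc, Set.union_eq_self_of_subset_right hX]
    _ = R (X \ (T₁ ∪ T₂)) := h₁₂ X
    _ = R ((X \ T₂) \ T₁) := by rw [Set.sdiff_sdiff, Set.union_comm]
    _ = R (X \ T₂) := h₁.apply_sdiff_of_subset (Set.subset_sdiff.2 ⟨hX, hd⟩)

theorem of_disjoint_union (hd : Disjoint T₁ T₂) (h₁ : Transfers R T₁)
    (h₁₂ : Transfers R (T₁ ∪ T₂))
    (hsub : ∀ U ⊂ T₁, Transfers R U ∨ Transfers R (T₁ \ U)) : Transfers R T₂ := by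
  intro X
  by_cases hX : T₁ ⊆ X
  · exact apply_union_eq_apply_sdiff_of_subset h₁ h₁₂ hd hX
  have hXT₁ : X ∩ T₁ ⊂ T₁ :=
    Set.inter_subset_right.ssubset_of_ne fun h => hX (h ▸ Set.inter_subset_left)
  rcases hsub _ hXT₁ with hU | hV
  · calc R (X ∪ T₂) = R ((X ∪ T₂) \ (X ∩ T₁)) := (hU.apply_sdiff_of_subset (by grind)).symm
      _ = R ((X \ T₁) ∪ T₂) := by congr 1; grind
      _ = R ((X \ T₁) \ T₂) :=
        apply_union_eq_apply_sdiff_of_disjoint h₁ h₁₂ hd Set.disjoint_sdiff_left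
      _ = R ((X \ T₂) \ (X ∩ T₁)) := by congr 1; grind
      _ = R (X \ T₂) := hU.apply_sdiff_of_subset (by grind)
  · rw [Set.sdiff_inter_self_eq_sdiff] at hV
    calc R (X ∪ T₂) = R ((X ∪ T₂) ∪ (T₁ \ X)) := (hV.apply_union_of_disjoint (by grind)).symm
      _ = R ((X ∪ (T₁ \ X)) ∪ T₂) := by congr 1; grind
      _ = R ((X ∪ (T₁ \ X)) \ T₂) := apply_union_eq_apply_sdiff_of_subset h₁ h₁₂ hd (by grind)
      _ = R ((X \ T₂) ∪ (T₁ \ X)) := by congr 1; grind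
      _ = R (X \ T₂) := hV.apply_union_of_disjoint (by grind)

end Transfers

open Classical in
theorem transferable_iff_forall_transfers {L : FirstOrder.Language.{u, v}} (T : L.Theory)
    {A : Type w} [L.Structure A] (B : L.Substructure A) {S : Type x} (W : L.Term S)
    (xs : S → A) (t : Set S) :
    Transferable T B W xs t ↔ ∀ (C : Type (max u v w)) [L.Structure C] [T.Model C]
      (f g : A →[L] C), (∀ b ∈ B, f b = g b) →
        Transfers (fun X : Set S => W.realize (X.piecewise (f ∘ xs) (g ∘ xs))) t := by
  constructor
  · intro h C _ _ f g hfg X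
    have := h (X \ t) (X ∪ t)ᶜ Set.disjoint_sdiff_left (by grind) (by grind) (by grind) C f g hfg
    unfold Set.piecewise
    simpa using this
  · intro h S₁ S₂ hS₁ _ _ _ C _ _ f g hfg
    have := h C f g hfg S₁
    unfold Set.piecewise at this; simpa [hS₁.sdiff_eq_left] using this

theorem transferable_of_disjoint_union_general {L : FirstOrder.Language.{u, v}} (T : L.Theory)
    {A : Type w} [L.Structure A] (B : L.Substructure A) {S : Type x}
    (W : L.Term S) (xs : S → A) (T₁ T₂ : Set S)
    (hdisj : Disjoint T₁ T₂)
    (hT₁ : Transferable T B W xs T₁)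
    (hT₁T₂ : Transferable T B W xs (T₁ ∪ T₂))
    (hsub : ∀ U : Set S, U ⊂ T₁ → Transferable T B W xs U ∨ Transferable T B W xs (T₁ \ U)) :
    Transferable T B W xs T₂ := by
  simp only [transferable_iff_forall_transfers] at hT₁ hT₁T₂ hsub ⊢
  intro C _ _ f g hfg
  exact .of_disjoint_union hdisj (hT₁ C f g hfg) (hT₁T₂ C f g hfg) fun U hU =>
    (hsub U hU).imp (fun h => h C f g hfg) (fun h => h C f g hfg)

/-- Suppose `T₁` and `T₂` are disjoint subsets of `S`, and both `T₁` and `T₁ ∪ T₂` are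
transferable over `B` with respect to `W(x)`. Suppose further that for every proper
subset `U` of `T₁`, either `U` or `T₁ \ U` is transferable. Then `T₂` is
transferable over `B` with respect to `W(x)`. -/
theorem transferable_of_disjoint_union {L : FirstOrder.Language.{u, v}} (T : L.Theory)
    {A : Type w} [L.Structure A] [T.Model A] (B : L.Substructure A) {S : Type x}
    (W : L.Term S) (xs : S → A) (T₁ T₂ : Set S)
    (hdisj : Disjoint T₁ T₂)
    (hT₁ : Transferable T B W xs T₁)
    (hT₁T₂ : Transferable T B W xs (T₁ ∪ T₂))
    (hsub : ∀ U : Set S, U ⊂ T₁ → Transferable T B W xs U ∨ Transferable T B W xs (T₁ \ U)) :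
    Transferable T B W xs T₂ :=
  transferable_of_disjoint_union_general T B W xs T₁ T₂ hdisj hT₁ hT₁T₂ hsub
end

section
/- Let 𝒞 be a variety of L-algebras, A ∈ 𝒞, B a subalgebra of A, W a term in a set S of variables, and x = (x_s)_{s∈S} an S-tuple of elements of A. Suppose there are a subset T ⊆ S and terms W′ (in one distinguished variable together with the variables of S ∖ T) and W″ (in the variables of T) such that W(x) = W′(W″((x_s)_{s∈T}), (x_s)_{s∈S∖T}) as a composite of terms, and suppose that W″ evaluated in A at the T-tuple (x_s)_{s∈T} gives an element of B. Then T is transferable over B with respect to W(x). -/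
open FirstOrder Language

universe u v w x

/-!
Moving the variables of `t` from the `f`-side to the `g`-side changes only the value of the
inner term `W''`, from `f (W''(x))` to `g (W''(x))`; these agree because `W''(x) ∈ B`, and the
outer term `W'` sees nothing else that changed.
-/

namespace FirstOrder.Language.Term

variable {L : Language} {M : Type*} [L.Structure M] {α β : Type*}

theorem realize_subst_congr (W : L.Term α) (σ : α → L.Term β) {v₁ v₂ : β → M}
    (h : ∀ a, (σ a).realize v₁ = (σ a).realize v₂) :
    (W.subst σ).realize v₁ = (W.subst σ).realize v₂ := by
  simp only [realize_subst]
  exact congrArg (fun v => W.realize v) (funext h)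

end FirstOrder.Language.Term

theorem transferable_of_inner_mem_general {L : FirstOrder.Language.{u, v}} (T : L.Theory)
    {A : Type w} [L.Structure A] (B : L.Substructure A) {S : Type x}
    (W : L.Term S) (xs : S → A) (t : Set S)
    (W'' : L.Term {s : S // s ∈ t}) (W' : L.Term (Unit ⊕ {s : S // s ∉ t}))
    (hcomp : W = W'.subst (Sum.elim
      (fun _ : Unit => W''.relabel (fun s : {s : S // s ∈ t} => (s : S)))
      (fun s : {s : S // s ∉ t} => Term.var (s : S))))
    (hmem : W''.realize (fun s : {s : S // s ∈ t} => xs (s : S)) ∈ B) :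
    Transferable T B W xs t := by
  intro S₁ _ hS₁t _ _ _ C _ _ f g hfg
  subst hcomp
  apply Term.realize_subst_congr
  rintro (_ | ⟨s, hs⟩)
  · simp only [Sum.elim_inl, Term.realize_relabel]
    calc _ = W''.realize (f ∘ fun s : t => xs s) :=
          congrArg (Term.realize · W'') (funext fun s => if_pos (Or.inr s.2))
      _ = W''.realize (g ∘ fun s : t => xs s) := by
          rw [HomClass.realize_term, HomClass.realize_term, hfg _ hmem]
      _ = _ :=
          congrArg (Term.realize · W'') <|
            funext fun s => (if_neg (hS₁t.notMem_of_mem_right s.2)).symm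
  · classical
    simp only [Sum.elim_inr, Term.realize_var, Set.mem_union, hs, or_false]

/-- Suppose `W` can be written as a composite of terms
`W(x) = W'(W''((x_s)_{s ∈ t}), (x_s)_{s ∈ S ∖ t})`, where `W''` is a term in the
variables of `t` and `W'` is a term in one distinguished variable (here `Sum.inl ()`)
together with the variables of `S ∖ t`, and suppose `W''` evaluated in `A` at the
`t`-tuple `(x_s)_{s ∈ t}` gives an element of `B`. Then `t` is transferable over `B`
with respect to `W(x)`. -/
theorem transferable_of_inner_mem {L : FirstOrder.Language.{u, v}} (T : L.Theory)
    {A : Type w} [L.Structure A] [T.Model A] (B : L.Substructure A) {S : Type x}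
    (W : L.Term S) (xs : S → A) (t : Set S)
    (W'' : L.Term {s : S // s ∈ t}) (W' : L.Term (Unit ⊕ {s : S // s ∉ t}))
    (hcomp : W = W'.subst (Sum.elim
      (fun _ : Unit => W''.relabel (fun s : {s : S // s ∈ t} => (s : S)))
      (fun s : {s : S // s ∉ t} => Term.var (s : S))))
    (hmem : W''.realize (fun s : {s : S // s ∈ t} => xs (s : S)) ∈ B) :
    Transferable T B W xs t :=
  transferable_of_inner_mem_general T B W xs t W'' W' hcomp hmem
end

section
/- Let 𝒞 be a variety of L-algebras and suppose {W_i, w_ij : 1 ≤ i, j ≤ m} is an equational array in 𝒞 of size m and signature (n₁,…,n_m). Let A ∈ 𝒞 and let B be a subalgebra of A. Suppose that for a particular choice of elements x_{ij} ∈ A one has w_ii(x_{i1},…,x_{in_i}) ∈ B for all 1 ≤ i ≤ m. Then W₁(w₁₁(x₁),…,w₁ₘ(xₘ)) lies in dom_A^𝒞(B), where x_j denotes the tuple (x_{j1},…,x_{jn_j}). -/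
open FirstOrder Language

universe u v w x

/-- A family `{W i, w i j : i, j < m}`, where each `W i` is a term in `m` variables
and each `w i j` is a term in `n j` variables, is an *equational array* in the variety
of models of `T`, of size `m` and signature `(n 0, …, n (m-1))`, if the value of
`W i (w i 0 (x 0), …, w i (m-1) (x (m-1)))` is the same for all `i`, in every algebra
of the variety and for all values of the indeterminates. -/
def IsEquationalArray {L : FirstOrder.Language.{u, v}} (T : L.Theory) (m : ℕ)
    (n : Fin m → ℕ) (W : Fin m → L.Term (Fin m))
    (w : Fin m → (j : Fin m) → L.Term (Fin (n j))) : Prop :=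
  ∀ (C : Type (max u v)) [L.Structure C] [T.Model C],
    ∀ (x : (j : Fin m) → Fin (n j) → C) (i i' : Fin m),
      (W i).realize (fun j => (w i j).realize (x j)) =
      (W i').realize (fun j => (w i' j).realize (x j))

/-!
Let `f, g : A → C` agree on `B`. Move the arguments of the array from `f ∘ x j` to `g ∘ x j`
one block at a time. Changing block `i` does not alter the common value of the array: read it
as `W i (w i 0 _, …, w i (m-1) _)`, where block `i` enters only through `w i i (x i) ∈ B`, on
which `f` and `g` agree.
-/

theorem Function.eq_of_forall_update_eq {ι γ : Type*} [Fintype ι] [DecidableEq ι]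
    {X : ι → Type*} (F : (∀ j, X j) → γ) (a b : ∀ j, X j)
    (h : ∀ v j, F (Function.update v j (a j)) = F (Function.update v j (b j))) : F a = F b := by
  suffices ∀ s : Finset ι, F (s.piecewise b a) = F a by
    simpa only [Finset.piecewise_univ] using (this Finset.univ).symm
  intro s
  induction s using Finset.induction_on with
  | empty => rw [Finset.piecewise_empty]
  | insert j s hj ih =>
    rw [Finset.piecewise_insert, ← h, ← Finset.piecewise_eq_of_notMem s b a hj,
      Function.update_eq_self, ih]

section EquationalArray

variable {L : FirstOrder.Language.{u, v}} {T : L.Theory} {m : ℕ} {n : Fin m → ℕ}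
  {W : Fin m → L.Term (Fin m)} {w : Fin m → (j : Fin m) → L.Term (Fin (n j))}

/-- `IsEquationalArray` only quantifies over algebras in `Type (max u v)`; passing through the
equation `T ⊨ W i (w i ·) = W i' (w i' ·)` transfers it to algebras in any universe. -/
theorem IsEquationalArray.realize_eq (harr : IsEquationalArray T m n W w)
    (C : Type*) [L.Structure C] [T.Model C] [Nonempty C]
    (x : (j : Fin m) → Fin (n j) → C) (i i' : Fin m) :
    (W i).realize (fun j => (w i j).realize (x j)) =
      (W i').realize (fun j => (w i' j).realize (x j)) := by
  let flatten : Fin m → L.Term ((j : Fin m) × Fin (n j)) :=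
    fun i => (W i).subst fun j => (w i j).relabel (Sigma.mk j)
  have hmodels : T ⊨ᵇ (flatten i).equal (flatten i') := by
    rw [Theory.models_formula_iff]
    intro M y
    simpa only [flatten, Formula.realize_equal, Term.realize_subst, Term.realize_relabel,
      Function.comp_def] using harr M (fun j k => y ⟨j, k⟩) i i'
  simpa only [flatten, Formula.realize_equal, Term.realize_subst, Term.realize_relabel,
      Function.comp_def] using hmodels.realize_formula C (v := fun p => x p.1 p.2)

theorem IsEquationalArray.realize_update_eq (harr : IsEquationalArray T m n W w)
    {C : Type*} [L.Structure C] [T.Model C] [Nonempty C] (k : Fin m)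
    (x : (j : Fin m) → Fin (n j) → C) (i : Fin m) {y y' : Fin (n i) → C}
    (hy : (w i i).realize y = (w i i).realize y') :
    (W k).realize (fun j => (w k j).realize (Function.update x i y j)) =
      (W k).realize (fun j => (w k j).realize (Function.update x i y' j)) := by
  rw [harr.realize_eq C _ k i, harr.realize_eq C _ k i]
  congr 1
  funext j
  rcases eq_or_ne j i with rfl | hji
  · simpa only [Function.update_self] using hy
  · simp only [Function.update_of_ne hji]

end EquationalArray

theorem equationalArray_realize_mem_dominion_general {L : FirstOrder.Language.{u, v}}
    (T : L.Theory) {A : Type w} [L.Structure A] (B : L.Substructure A)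
    (m : ℕ) (hm : 0 < m) (n : Fin m → ℕ) (W : Fin m → L.Term (Fin m))
    (w : Fin m → (j : Fin m) → L.Term (Fin (n j)))
    (harr : IsEquationalArray T m n W w)
    (x : (j : Fin m) → Fin (n j) → A)
    (hB : ∀ i : Fin m, (w i i).realize (x i) ∈ B) :
    (W ⟨0, hm⟩).realize (fun j => (w ⟨0, hm⟩ j).realize (x j)) ∈ Dominion T B := by
  intro C _ _ f g hfg
  have : Nonempty C := ⟨f ((w ⟨0, hm⟩ ⟨0, hm⟩).realize (x _))⟩
  have hvalue (h : A →[L] C) :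
      (W ⟨0, hm⟩).realize (fun j => (w ⟨0, hm⟩ j).realize (h ∘ x j)) =
        h ((W ⟨0, hm⟩).realize (fun j => (w ⟨0, hm⟩ j).realize (x j))) := by
    simp only [HomClass.realize_term, ← Function.comp_def h]
  rw [← hvalue f, ← hvalue g]
  refine Function.eq_of_forall_update_eq
    (fun y => (W ⟨0, hm⟩).realize (fun j => (w ⟨0, hm⟩ j).realize (y j))) _ _ fun y i => ?_
  refine harr.realize_update_eq _ y i ?_
  simpa only [HomClass.realize_term] using hfg _ (hB i)

/-- If `{W i, w i j}` is an equational array in the variety, `A` an algebra of the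
variety, `B` a subalgebra of `A`, and `x` is a choice of elements of `A` with
`w i i (x i) ∈ B` for all `i`, then `W 0 (w 0 0 (x 0), …, w 0 (m-1) (x (m-1)))` lies
in the dominion of `B` in `A`. -/
theorem equationalArray_realize_mem_dominion {L : FirstOrder.Language.{u, v}}
    (T : L.Theory) {A : Type w} [L.Structure A] [T.Model A] (B : L.Substructure A)
    (m : ℕ) (hm : 0 < m) (n : Fin m → ℕ) (W : Fin m → L.Term (Fin m))
    (w : Fin m → (j : Fin m) → L.Term (Fin (n j)))
    (harr : IsEquationalArray T m n W w)
    (x : (j : Fin m) → Fin (n j) → A)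
    (hB : ∀ i : Fin m, (w i i).realize (x i) ∈ B) :
    (W ⟨0, hm⟩).realize (fun j => (w ⟨0, hm⟩ j).realize (x j)) ∈ Dominion T B :=
  equationalArray_realize_mem_dominion_general T B m hm n W w harr x hB
end

section
/- Let 𝒞 be a variety of L-algebras, A ∈ 𝒞, and B a subalgebra of A. Let B* be the set of all elements of A of the form W₁(w₁₁(x₁),…,w₁ₘ(xₘ)), where {W_i, w_ij} ranges over all equational arrays in 𝒞 (of all sizes m and all signatures (n₁,…,n_m)) and the tuples x_j = (x_{j1},…,x_{jn_j}) of elements of A satisfy w_ii(x_i) ∈ B for all i = 1,…,m. Then B ⊆ B* ⊆ dom_A^𝒞(B), and B* is a subalgebra of A (it contains all constants and is closed under every operation of L). -/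
open FirstOrder Language

universe u v w x

/-- `B*` : the set of all elements of `A` of the form
`W 0 (w 0 0 (x 0), …, w 0 (m-1) (x (m-1)))`, where `{W i, w i j}` ranges over all
equational arrays in the variety (of all sizes and signatures) and the tuples `x j` of
elements of `A` satisfy `w i i (x i) ∈ B` for all `i`. -/
def Bstar {L : FirstOrder.Language.{u, v}} (T : L.Theory) {A : Type w} [L.Structure A]
    (B : L.Substructure A) : Set A :=
  {a : A | ∃ (m : ℕ) (hm : 0 < m) (n : Fin m → ℕ) (W : Fin m → L.Term (Fin m))
      (w : Fin m → (j : Fin m) → L.Term (Fin (n j))) (x : (j : Fin m) → Fin (n j) → A),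
    IsEquationalArray T m n W w ∧ (∀ i : Fin m, (w i i).realize (x i) ∈ B) ∧
    a = (W ⟨0, hm⟩).realize (fun j => (w ⟨0, hm⟩ j).realize (x j))}


/-! Equational arrays are handled in a more flexible shape: rows and columns indexed by an
arbitrary finite type, and one type of variables shared by all columns, each column being
evaluated at its own valuation. `B ⊆ B*` is witnessed by the `1 × 1` array `x = x`.
If `f` and `g` agree on `B`, they agree on every diagonal entry `w i i (x)`; switching the
columns from `f` to `g` one at a time, each switch is invisible in the row whose diagonal
entry it changes, and all rows have the same value, so `B* ⊆ dom(B)`. For closure under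
`F`, the arrays of `a 1, …, a k` are merged into one indexed by the disjoint union of their
index types: row `⟨c, r⟩` is `F` applied to row `r` of the `c`-th array and to the
designated rows of the others. -/

section EquationalArray

variable {L : FirstOrder.Language.{u, v}} {ι α : Type*}

def arrayRow {M : Type*} [L.Structure M] (W : ι → L.Term ι) (w : ι → ι → L.Term α)
    (y : ι → α → M) (i : ι) : M :=
  (W i).realize fun j => (w i j).realize (y j)

def arrayTerm (W : ι → L.Term ι) (w : ι → ι → L.Term α) (i : ι) : L.Term (ι × α) :=
  (W i).subst fun j => (w i j).relabel (Prod.mk j)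

/-- Stated with `⊨ᵇ` rather than by quantifying over models, so that it applies to models
in every universe. -/
def IsEqArray (T : L.Theory) (W : ι → L.Term ι) (w : ι → ι → L.Term α) : Prop :=
  ∀ i i', T ⊨ᵇ (arrayTerm W w i).equal (arrayTerm W w i')

theorem realize_arrayTerm {M : Type*} [L.Structure M] (W : ι → L.Term ι)
    (w : ι → ι → L.Term α) (y : ι → α → M) (i : ι) :
    (arrayTerm W w i).realize (Function.uncurry y) = arrayRow W w y i := by
  simp only [arrayTerm, arrayRow, Term.realize_subst, Term.realize_relabel]
  rfl

theorem map_arrayRow {M N : Type*} [L.Structure M] [L.Structure N] (f : M →[L] N)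
    (W : ι → L.Term ι) (w : ι → ι → L.Term α) (y : ι → α → M) (i : ι) :
    f (arrayRow W w y i) = arrayRow W w (fun j => f ∘ y j) i := by
  simp only [arrayRow, ← HomClass.realize_term, Function.comp_def]

theorem arrayRow_reindex {ι' α' M : Type*} [L.Structure M] (W : ι → L.Term ι)
    (w : ι → ι → L.Term α) (e : ι ≃ ι') (eα : α ≃ α') (y : ι' → α' → M) (i : ι') :
    arrayRow (fun i => (W (e.symm i)).relabel e)
        (fun i j => (w (e.symm i) (e.symm j)).relabel eα) y i =
      arrayRow W w (fun j => y (e j) ∘ eα) (e.symm i) := by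
  simp [arrayRow, Term.realize_relabel, Function.comp_def]

namespace IsEqArray

variable {T : L.Theory} {W : ι → L.Term ι} {w : ι → ι → L.Term α}

theorem arrayRow_eq (h : IsEqArray T W w) {C : Type*} [L.Structure C] [T.Model C]
    [Nonempty C] (y : ι → α → C) (i i' : ι) : arrayRow W w y i = arrayRow W w y i' := by
  simpa only [Formula.realize_equal, realize_arrayTerm] using
    (h i i').realize_formula C (v := Function.uncurry y)

theorem arrayRow_eq_of_diag (h : IsEqArray T W w) [Finite ι] {C : Type*} [L.Structure C]
    [T.Model C] [Nonempty C] {y z : ι → α → C}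
    (hyz : ∀ i, (w i i).realize (y i) = (w i i).realize (z i)) (i : ι) :
    arrayRow W w y i = arrayRow W w z i := by
  classical
  have := Fintype.ofFinite ι
  have hybrid : ∀ S : Finset ι,
      arrayRow W w (fun j => if j ∈ S then z j else y j) i = arrayRow W w y i := by
    intro S
    induction S using Finset.induction_on with
    | empty => simp
    | insert a S ha ih =>
      rw [← ih, h.arrayRow_eq _ i a, h.arrayRow_eq _ i a]
      unfold arrayRow
      congr 1
      funext j
      by_cases hj : j = a
      · subst hj
        simp [ha, hyz]
      · simp [hj]
  simpa using (hybrid Finset.univ).symm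

theorem arrayRow_mem_dominion (h : IsEqArray T W w) [Finite ι] {A : Type*} [L.Structure A]
    {B : L.Substructure A} {v : α → A} (hv : ∀ i, (w i i).realize v ∈ B) (i : ι) :
    arrayRow W w (fun _ => v) i ∈ Dominion T B := by
  intro C _ _ f g hfg
  have : Nonempty C := ⟨f (arrayRow W w (fun _ => v) i)⟩
  rw [map_arrayRow, map_arrayRow]
  refine h.arrayRow_eq_of_diag (fun j => ?_) i
  rw [HomClass.realize_term, HomClass.realize_term, hfg _ (hv j)]

theorem reindex {ι' α' : Type*} (h : IsEqArray T W w) (e : ι ≃ ι') (eα : α ≃ α') :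
    IsEqArray T (fun i => (W (e.symm i)).relabel e)
      (fun i j => (w (e.symm i) (e.symm j)).relabel eα) := fun i i' =>
  Theory.models_formula_iff.2 fun M y => by
    rw [Formula.realize_equal, ← Function.uncurry_curry y, realize_arrayTerm, realize_arrayTerm,
      arrayRow_reindex, arrayRow_reindex]
    exact h.arrayRow_eq _ _ _

theorem isEquationalArray {m N : ℕ} {W : Fin m → L.Term (Fin m)}
    {w : Fin m → Fin m → L.Term (Fin N)} (h : IsEqArray T W w) :
    IsEquationalArray T m (fun _ => N) W w := fun C _ _ x i i' =>
  have : Nonempty C := ⟨arrayRow W w x i⟩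
  h.arrayRow_eq x i i'

end IsEqArray

theorem IsEquationalArray.isEqArray_sigma {T : L.Theory} {m : ℕ} {n : Fin m → ℕ}
    {W : Fin m → L.Term (Fin m)} {w : Fin m → (j : Fin m) → L.Term (Fin (n j))}
    (h : IsEquationalArray T m n W w) :
    IsEqArray T W fun i j => (w i j).relabel (Sigma.mk j) := fun i i' =>
  Theory.models_formula_iff.2 fun M v => by
    rw [Formula.realize_equal, ← Function.uncurry_curry v, realize_arrayTerm, realize_arrayTerm]
    simpa [arrayRow, Term.realize_relabel, Function.comp_def] using
      h M (fun j s => v (j, ⟨j, s⟩)) i i'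

end EquationalArray

section FuncArray

variable {L : FirstOrder.Language.{u, v}} {k : ℕ} {ι α : Fin k → Type*}

def funcArrayRows (F : L.Functions k) (W : ∀ c, ι c → L.Term (ι c)) (i₀ : ∀ c, ι c)
    (p : Σ c, ι c) : L.Term (Σ c, ι c) :=
  func F fun c => (W c (Function.update i₀ p.1 p.2 c)).relabel (Sigma.mk c)

def funcArrayEntries (w : ∀ c, ι c → ι c → L.Term (α c)) (i₀ : ∀ c, ι c)
    (p q : Σ c, ι c) : L.Term (Σ c, α c) :=
  (w q.1 (Function.update i₀ p.1 p.2 q.1) q.2).relabel (Sigma.mk q.1)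

variable (F : L.Functions k) {W : ∀ c, ι c → L.Term (ι c)}
  {w : ∀ c, ι c → ι c → L.Term (α c)} (i₀ : ∀ c, ι c)

theorem arrayRow_funcArray {M : Type*} [L.Structure M] (y : (Σ c, ι c) → (Σ c, α c) → M)
    (p : Σ c, ι c) :
    arrayRow (funcArrayRows F W i₀) (funcArrayEntries w i₀) y p =
      Structure.funMap F fun c => arrayRow (W c) (w c) (fun j s => y ⟨c, j⟩ ⟨c, s⟩)
        (Function.update i₀ p.1 p.2 c) := by
  simp [arrayRow, funcArrayRows, funcArrayEntries, Term.realize_relabel, Function.comp_def]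

theorem realize_funcArrayEntries_self {M : Type*} [L.Structure M] (v : (Σ c, α c) → M)
    (p : Σ c, ι c) :
    (funcArrayEntries w i₀ p p).realize v = (w p.1 p.2 p.2).realize fun s => v ⟨p.1, s⟩ := by
  simp [funcArrayEntries, Term.realize_relabel, Function.comp_def]

theorem IsEqArray.funcArray {T : L.Theory} (h : ∀ c, IsEqArray T (W c) (w c)) :
    IsEqArray T (funcArrayRows F W i₀) (funcArrayEntries w i₀) := fun p p' =>
  Theory.models_formula_iff.2 fun M y => by
    rw [Formula.realize_equal, ← Function.uncurry_curry y, realize_arrayTerm, realize_arrayTerm,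
      arrayRow_funcArray, arrayRow_funcArray]
    exact congrArg (Structure.funMap F) (funext fun c => (h c).arrayRow_eq _ _ _)

end FuncArray

section Bstar

variable {L : FirstOrder.Language.{u, v}} {T : L.Theory} {A : Type w} [L.Structure A]
  {B : L.Substructure A}

theorem exists_isEqArray_of_mem_bstar {a : A} (ha : a ∈ Bstar T B) :
    ∃ (m : ℕ) (n : Fin m → ℕ) (W : Fin m → L.Term (Fin m))
      (w : Fin m → Fin m → L.Term (Σ j, Fin (n j))) (v : (Σ j, Fin (n j)) → A) (i₀ : Fin m),
      IsEqArray T W w ∧ (∀ i, (w i i).realize v ∈ B) ∧ arrayRow W w (fun _ => v) i₀ = a := by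
  obtain ⟨m, hm, n, W, w, x, h, hx, rfl⟩ := ha
  exact ⟨m, n, W, _, fun p => x p.1 p.2, ⟨0, hm⟩, h.isEqArray_sigma,
    fun i => by simpa [Term.realize_relabel, Function.comp_def] using hx i,
    by simp [arrayRow, Term.realize_relabel, Function.comp_def]⟩

theorem mem_bstar_of_isEqArray {ι α : Type*} [Fintype ι] [Fintype α] {W : ι → L.Term ι}
    {w : ι → ι → L.Term α} (h : IsEqArray T W w) {v : α → A}
    (hv : ∀ i, (w i i).realize v ∈ B) (i₀ : ι) :
    arrayRow W w (fun _ => v) i₀ ∈ Bstar T B := by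
  have hm : 0 < Fintype.card ι := Fintype.card_pos_iff.2 ⟨i₀⟩
  set e : ι ≃ Fin (Fintype.card ι) :=
    (Fintype.equivFin ι).trans (Equiv.swap (Fintype.equivFin ι i₀) ⟨0, hm⟩)
  have he : e.symm ⟨0, hm⟩ = i₀ := by simp [e]
  set eα := Fintype.equivFin α
  refine ⟨_, hm, _, _, _, fun _ => v ∘ eα.symm, (h.reindex e eα).isEquationalArray,
    fun i => ?_, ?_⟩
  · simpa [Term.realize_relabel, Function.comp_def] using hv (e.symm i)
  · calc arrayRow W w (fun _ => v) i₀
        = arrayRow W w (fun j => (v ∘ eα.symm) ∘ eα) (e.symm ⟨0, hm⟩) := by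
          simp [he, Function.comp_def]
      _ = _ := (arrayRow_reindex W w e eα (fun _ => v ∘ eα.symm) ⟨0, hm⟩).symm

variable (T B) in
theorem coe_subset_bstar : (B : Set A) ⊆ Bstar T B := fun b hb =>
  ⟨1, one_pos, fun _ => 1, fun _ => Term.var 0, fun _ _ => Term.var 0, fun _ _ => b,
    fun _ _ _ _ i i' => by rw [Subsingleton.elim i i'], fun _ => hb, rfl⟩

theorem bstar_subset_dominion : Bstar T B ⊆ Dominion T B := by
  intro a ha
  obtain ⟨m, n, W, w, v, i₀, h, hv, rfl⟩ := exists_isEqArray_of_mem_bstar ha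
  exact h.arrayRow_mem_dominion hv i₀

theorem funMap_mem_bstar {k : ℕ} (F : L.Functions k) {a : Fin k → A}
    (ha : ∀ c, a c ∈ Bstar T B) : Structure.funMap F a ∈ Bstar T B := by
  rcases k.eq_zero_or_pos with rfl | hk
  · exact coe_subset_bstar T B (B.fun_mem F a finZeroElim)
  choose m n W w v i₀ h hv hva using fun c => exists_isEqArray_of_mem_bstar (ha c)
  have := mem_bstar_of_isEqArray (IsEqArray.funcArray F i₀ h) (v := fun q => v q.1 q.2)
    (fun p => by simpa only [realize_funcArrayEntries_self] using hv p.1 p.2) ⟨⟨0, hk⟩, i₀ _⟩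
  rwa [arrayRow_funcArray, Function.update_eq_self, funext hva] at this

end Bstar

theorem bstar_subalgebra_between_general {L : FirstOrder.Language.{u, v}} (T : L.Theory)
    {A : Type w} [L.Structure A] (B : L.Substructure A) :
    (B : Set A) ⊆ Bstar T B ∧ Bstar T B ⊆ Dominion T B ∧
    (∀ (k : ℕ) (F : L.Functions k) (a : Fin k → A),
      (∀ i : Fin k, a i ∈ Bstar T B) → Structure.funMap F a ∈ Bstar T B) :=
  ⟨coe_subset_bstar T B, bstar_subset_dominion, fun _ F _ => funMap_mem_bstar F⟩

/-- `B ⊆ B* ⊆ dom_A(B)`, and `B*` is a subalgebra of `A`: it contains all constants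
and is closed under every operation of `L` (constants being the nullary operations). -/
theorem bstar_subalgebra_between {L : FirstOrder.Language.{u, v}} (T : L.Theory)
    {A : Type w} [L.Structure A] [T.Model A] (B : L.Substructure A) :
    (B : Set A) ⊆ Bstar T B ∧ Bstar T B ⊆ Dominion T B ∧
    (∀ (k : ℕ) (F : L.Functions k) (a : Fin k → A),
      (∀ i : Fin k, a i ∈ Bstar T B) → Structure.funMap F a ∈ Bstar T B) :=
  bstar_subalgebra_between_general T B
end

section
/- Let 𝒞 be a variety of L-algebras. Let x₁ = (x₁₁,…,x_{1m₁}), x₂ = (x₂₁,…,x_{2m₂}), y = (y₁,…,y_{m₃}) be indeterminates; let w₁₁, w₂₁ be L-terms in m₁ + m₃ indeterminates, w₁₂, w₂₂ L-terms in m₂ + m₃ indeterminates, and W₁, W₂ L-terms in two indeterminates. Suppose the identity W₁(w₁₁(x₁, y), w₁₂(x₂, y)) = W₂(w₂₁(x₁, y), w₂₂(x₂, y)) holds in every algebra of 𝒞. Let A ∈ 𝒞 and B a subalgebra of A. If for some choice of elements x_{ij} ∈ A and y_k ∈ B we have w₁₁(x₁, y) ∈ B and w₂₂(x₂, y) ∈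 B, then W₁(w₁₁(x₁, y), w₁₂(x₂, y)) ∈ dom_A^𝒞(B). -/
/-!
Let `f, g : A → C` agree on `B`. Since `y` and `w₁₁(x₁, y)` lie in `B`, `f` sends
`W₁(w₁₁(x₁, y), w₁₂(x₂, y))` to the value of `W₁(w₁₁, w₁₂)` at the mixed point
`(g x₁, f x₂, g y)`. The identity turns this into `W₂(w₂₁, w₂₂)` at the same point, where now
`w₂₂(x₂, y) ∈ B` lets `f x₂` be replaced by `g x₂`; a second use of the identity gives `g` of
the element.
-/

open FirstOrder Language

universe u v w x

namespace FirstOrder.Language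

variable {L : Language.{u, v}}

/-- Models in the smallest universe suffice: `T ⊨ᵇ t₁ = t₂` is transferred to models of any
size by `ModelsBoundedFormula.realize_formula`, i.e. by downward Löwenheim–Skolem. -/
theorem Term.realize_eq_of_forall_models {T : L.Theory} {α : Type w} {t₁ t₂ : L.Term α}
    (h : ∀ (M : Type (max u v w)) [L.Structure M] [M ⊨ T] (v : α → M),
      t₁.realize v = t₂.realize v)
    (M : Type x) [L.Structure M] [M ⊨ T] (v : α → M) : t₁.realize v = t₂.realize v := by
  have hT : T ⊨ᵇ t₁.equal t₂ :=
    Theory.models_formula_iff.2 fun M v => Formula.realize_equal.2 (h M v)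
  have : Nonempty M := ⟨t₁.realize v⟩
  exact Formula.realize_equal.1 (hT.realize_formula M)

theorem HomClass.map_realize_pair {M N : Type*} [L.Structure M] [L.Structure N] {F : Type*}
    [FunLike F M N] [HomClass L F M N] (g : F) (W : L.Term (Fin 2)) (a b : M) :
    g (W.realize ![a, b]) = W.realize ![g a, g b] := by
  rw [← HomClass.realize_term, ← FinVec.map_eq]
  rfl

theorem HomClass.map_realize_sumElim {M N : Type*} [L.Structure M] [L.Structure N] {F : Type*}
    [FunLike F M N] [HomClass L F M N] (g : F) {α β : Type*} (t : L.Term (α ⊕ β))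
    (x : α → M) (y : β → M) :
    g (t.realize (Sum.elim x y)) = t.realize (Sum.elim (g ∘ x) (g ∘ y)) := by
  rw [← Sum.comp_elim, HomClass.realize_term]

variable {α β γ : Type w}

def Term.substPair (W : L.Term (Fin 2)) (w₁ : L.Term (α ⊕ γ)) (w₂ : L.Term (β ⊕ γ)) :
    L.Term ((α ⊕ β) ⊕ γ) :=
  W.subst ![w₁.relabel (Sum.map Sum.inl id), w₂.relabel (Sum.map Sum.inr id)]

@[simp]
theorem Term.realize_substPair {M : Type*} [L.Structure M] (W : L.Term (Fin 2))
    (w₁ : L.Term (α ⊕ γ)) (w₂ : L.Term (β ⊕ γ)) (x₁ : α → M) (x₂ : β → M) (y : γ → M) :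
    (W.substPair w₁ w₂).realize (Sum.elim (Sum.elim x₁ x₂) y) =
      W.realize ![w₁.realize (Sum.elim x₁ y), w₂.realize (Sum.elim x₂ y)] := by
  rw [substPair, realize_subst]
  congr 1
  ext i
  fin_cases i <;> simp [Sum.elim_comp_map]

theorem Term.realize_pair_eq_of_forall_models {T : L.Theory} {W₁ W₂ : L.Term (Fin 2)}
    {w₁₁ w₂₁ : L.Term (α ⊕ γ)} {w₁₂ w₂₂ : L.Term (β ⊕ γ)}
    (h : ∀ (M : Type (max u v w)) [L.Structure M] [M ⊨ T]
      (x₁ : α → M) (x₂ : β → M) (y : γ → M),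
        W₁.realize ![w₁₁.realize (Sum.elim x₁ y), w₁₂.realize (Sum.elim x₂ y)] =
        W₂.realize ![w₂₁.realize (Sum.elim x₁ y), w₂₂.realize (Sum.elim x₂ y)])
    (M : Type x) [L.Structure M] [M ⊨ T] (x₁ : α → M) (x₂ : β → M) (y : γ → M) :
    W₁.realize ![w₁₁.realize (Sum.elim x₁ y), w₁₂.realize (Sum.elim x₂ y)] =
      W₂.realize ![w₂₁.realize (Sum.elim x₁ y), w₂₂.realize (Sum.elim x₂ y)] := by
  simp only [← realize_substPair]
  refine realize_eq_of_forall_models (T := T) (fun N _ _ v => ?_) M _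
  rw [← Sum.elim_comp_inl_inr v, ← Sum.elim_comp_inl_inr (v ∘ Sum.inl)]
  simp only [realize_substPair]
  exact h N _ _ _

end FirstOrder.Language

theorem arraystwo_mem_dominion_general {L : FirstOrder.Language.{u, v}} (T : L.Theory)
    {A : Type w} [L.Structure A] (B : L.Substructure A)
    (m₁ m₂ m₃ : ℕ)
    (w₁₁ w₂₁ : L.Term (Fin m₁ ⊕ Fin m₃)) (w₁₂ w₂₂ : L.Term (Fin m₂ ⊕ Fin m₃))
    (W₁ W₂ : L.Term (Fin 2))
    (hid : ∀ (C : Type (max u v)) [L.Structure C] [T.Model C],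
      ∀ (x₁ : Fin m₁ → C) (x₂ : Fin m₂ → C) (y : Fin m₃ → C),
        W₁.realize ![w₁₁.realize (Sum.elim x₁ y), w₁₂.realize (Sum.elim x₂ y)] =
        W₂.realize ![w₂₁.realize (Sum.elim x₁ y), w₂₂.realize (Sum.elim x₂ y)])
    (x₁ : Fin m₁ → A) (x₂ : Fin m₂ → A) (y : Fin m₃ → A)
    (hy : ∀ k : Fin m₃, y k ∈ B)
    (h₁₁ : w₁₁.realize (Sum.elim x₁ y) ∈ B)
    (h₂₂ : w₂₂.realize (Sum.elim x₂ y) ∈ B) :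
    W₁.realize ![w₁₁.realize (Sum.elim x₁ y), w₁₂.realize (Sum.elim x₂ y)] ∈
      Dominion T B := by
  intro C _ _ f g hfg
  have hfy : f ∘ y = g ∘ y := funext fun k => hfg _ (hy k)
  have hid' := Term.realize_pair_eq_of_forall_models hid C
  have h₂₂' : w₂₂.realize (Sum.elim (f ∘ x₂) (g ∘ y)) =
      w₂₂.realize (Sum.elim (g ∘ x₂) (g ∘ y)) := by
    rw [← hfy, ← HomClass.map_realize_sumElim, hfg _ h₂₂, HomClass.map_realize_sumElim, hfy]
  calc f (W₁.realize ![w₁₁.realize (Sum.elim x₁ y), w₁₂.realize (Sum.elim x₂ y)])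
      = W₁.realize ![w₁₁.realize (Sum.elim (g ∘ x₁) (g ∘ y)),
          w₁₂.realize (Sum.elim (f ∘ x₂) (g ∘ y))] := by
        rw [HomClass.map_realize_pair, hfg _ h₁₁, HomClass.map_realize_sumElim g,
          HomClass.map_realize_sumElim f, hfy]
    _ = W₂.realize ![w₂₁.realize (Sum.elim (g ∘ x₁) (g ∘ y)),
          w₂₂.realize (Sum.elim (g ∘ x₂) (g ∘ y))] := by
        rw [hid', h₂₂']
    _ = g (W₁.realize ![w₁₁.realize (Sum.elim x₁ y), w₁₂.realize (Sum.elim x₂ y)]) := by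
        rw [← hid', HomClass.map_realize_pair, HomClass.map_realize_sumElim, HomClass.map_realize_sumElim]

/-- Suppose the identity
`W₁(w₁₁(x₁, y), w₁₂(x₂, y)) = W₂(w₂₁(x₁, y), w₂₂(x₂, y))` holds in every algebra of
the variety of models of `T`. Let `A` be an algebra of the variety and `B` a
subalgebra of `A`. If for some choice of elements `x₁, x₂` of `A` and `y` of `B` we
have `w₁₁(x₁, y) ∈ B` and `w₂₂(x₂, y) ∈ B`, then
`W₁(w₁₁(x₁, y), w₁₂(x₂, y))` lies in the dominion of `B` in `A`. -/
theorem arraystwo_mem_dominion {L : FirstOrder.Language.{u, v}} (T : L.Theory)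
    {A : Type w} [L.Structure A] [T.Model A] (B : L.Substructure A)
    (m₁ m₂ m₃ : ℕ)
    (w₁₁ w₂₁ : L.Term (Fin m₁ ⊕ Fin m₃)) (w₁₂ w₂₂ : L.Term (Fin m₂ ⊕ Fin m₃))
    (W₁ W₂ : L.Term (Fin 2))
    (hid : ∀ (C : Type (max u v)) [L.Structure C] [T.Model C],
      ∀ (x₁ : Fin m₁ → C) (x₂ : Fin m₂ → C) (y : Fin m₃ → C),
        W₁.realize ![w₁₁.realize (Sum.elim x₁ y), w₁₂.realize (Sum.elim x₂ y)] =
        W₂.realize ![w₂₁.realize (Sum.elim x₁ y), w₂₂.realize (Sum.elim x₂ y)])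
    (x₁ : Fin m₁ → A) (x₂ : Fin m₂ → A) (y : Fin m₃ → A)
    (hy : ∀ k : Fin m₃, y k ∈ B)
    (h₁₁ : w₁₁.realize (Sum.elim x₁ y) ∈ B)
    (h₂₂ : w₂₂.realize (Sum.elim x₂ y) ∈ B) :
    W₁.realize ![w₁₁.realize (Sum.elim x₁ y), w₁₂.realize (Sum.elim x₂ y)] ∈
      Dominion T B :=
  arraystwo_mem_dominion_general T B m₁ m₂ m₃ w₁₁ w₂₁ w₁₂ w₂₂ W₁ W₂ hid x₁ x₂ y hy h₁₁ h₂₂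
end

section
/- Let G be a group satisfying the identity ⁅⁅a,b⁆,c⁆ = 1 for all a, b, c (i.e., G is nilpotent of class at most two), let H be a subgroup of G, and suppose that for some x, y ∈ G and some integer n > 0 both x^n and y^n lie in H. Then ⁅x,y⁆^n lies in the dominion of H in G in the variety 𝒩₂ of groups of nilpotency class at most two; that is, for every group C satisfying ⁅⁅a,b⁆,c⁆ = 1 for all a, b, c, and all group homomorphisms f, g : G → C with f|_H = g|_H, one has f(⁅x,y⁆^n) = g(⁅x,y⁆^n). -/
universe u

open scoped commutatorElement

/-! In a group of class at most two, commutators are central, so `⁅·, ·⁆` is multiplicative in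
each argument and `⁅a, b⁆ ^ n = ⁅a ^ n, b⁆ = ⁅a, b ^ n⁆`. Hence `⁅a, b⁆ ^ n` depends only on
`a ^ n` and `b ^ n`, which two homomorphisms agreeing on `H` send to the same elements. -/

section NilpotencyClassTwo

variable {C : Type*} [Group C] (hC : ∀ a b c : C, ⁅⁅a, b⁆, c⁆ = 1)
include hC

theorem commutatorElement_mul_left_of_class_two (a a' b : C) :
    ⁅a * a', b⁆ = ⁅a, b⁆ * ⁅a', b⁆ := by
  have hcentral : ∀ u v w : C, Commute ⁅u, v⁆ w := fun u v w =>
    commutatorElement_eq_one_iff_commute.mp (hC u v w)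
  rw [commutatorElement_mul_left_eq_conj_mul, ← (hcentral a' b a).eq, mul_inv_cancel_right,
    (hcentral a' b _).eq]

theorem commutatorElement_pow_left_of_class_two (a b : C) (n : ℕ) :
    ⁅a ^ n, b⁆ = ⁅a, b⁆ ^ n := by
  induction n with
  | zero => simp
  | succ k ih => rw [pow_succ', commutatorElement_mul_left_of_class_two hC, ih, pow_succ']

theorem commutatorElement_pow_right_of_class_two (a b : C) (n : ℕ) :
    ⁅a, b ^ n⁆ = ⁅a, b⁆ ^ n := by
  rw [← commutatorElement_inv, commutatorElement_pow_left_of_class_two hC, ← inv_pow,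
    commutatorElement_inv]

theorem commutatorElement_pow_eq_of_pow_eq_of_class_two {a a' b b' : C} {n : ℕ}
    (ha : a ^ n = a' ^ n) (hb : b ^ n = b' ^ n) : ⁅a, b⁆ ^ n = ⁅a', b'⁆ ^ n :=
  calc ⁅a, b⁆ ^ n = ⁅a, b ^ n⁆ := (commutatorElement_pow_right_of_class_two hC a b n).symm
    _ = ⁅a, b'⁆ ^ n := by rw [hb, commutatorElement_pow_right_of_class_two hC]
    _ = ⁅a ^ n, b'⁆ := (commutatorElement_pow_left_of_class_two hC a b' n).symm
    _ = ⁅a', b'⁆ ^ n := by rw [ha, commutatorElement_pow_left_of_class_two hC]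

end NilpotencyClassTwo

theorem commutator_pow_mem_dominion_nilpotentTwo_general {G : Type u} [Group G]
    (H : Subgroup G)
    (x y : G) (n : ℕ) (hx : x ^ n ∈ H) (hy : y ^ n ∈ H) :
    ∀ (C : Type u) [Group C], (∀ a b c : C, ⁅⁅a, b⁆, c⁆ = 1) →
      ∀ f g : G →* C, (∀ h ∈ H, f h = g h) →
        f (⁅x, y⁆ ^ n) = g (⁅x, y⁆ ^ n) := by
  intro C _ hC f g hfg
  have hxn : f x ^ n = g x ^ n := by simpa only [map_pow] using hfg _ hx
  have hyn : f y ^ n = g y ^ n := by simpa only [map_pow] using hfg _ hy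
  simpa only [map_pow, map_commutatorElement] using
    commutatorElement_pow_eq_of_pow_eq_of_class_two hC hxn hyn

/-- Let `G` be a group of nilpotency class at most two (i.e. satisfying the identity
`⁅⁅a,b⁆,c⁆ = 1`), `H` a subgroup of `G`, and suppose that for some `x, y ∈ G` and some
integer `n > 0` both `x^n` and `y^n` lie in `H`. Then `⁅x,y⁆^n` lies in the dominion of
`H` in `G` in the variety `𝒩₂` of groups of nilpotency class at most two: for every
group `C` satisfying `⁅⁅a,b⁆,c⁆ = 1` and all homomorphisms `f, g : G → C` agreeing on
`H`, we have `f(⁅x,y⁆^n) = g(⁅x,y⁆^n)`. -/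
theorem commutator_pow_mem_dominion_nilpotentTwo {G : Type u} [Group G]
    (hG : ∀ a b c : G, ⁅⁅a, b⁆, c⁆ = 1) (H : Subgroup G)
    (x y : G) (n : ℕ) (hn : 0 < n) (hx : x ^ n ∈ H) (hy : y ^ n ∈ H) :
    ∀ (C : Type u) [Group C], (∀ a b c : C, ⁅⁅a, b⁆, c⁆ = 1) →
      ∀ f g : G →* C, (∀ h ∈ H, f h = g h) →
        f (⁅x, y⁆ ^ n) = g (⁅x, y⁆ ^ n) :=
  commutator_pow_mem_dominion_nilpotentTwo_general H x y n hx hy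
end

section
/- Let S be a set and let 𝒯 be a transfer system on S. Then 𝒯 is a pre-transfer system on S; explicitly: (i) ∅ ∈ 𝒯; (ii) if T₁, T₂ ∈ 𝒯 and T₁ ∩ T₂ ∈ 𝒯, then T₁ ∪ T₂ ∈ 𝒯 (in particular, if T₁ ∩ T₂ = ∅ and T₁, T₂ ∈ 𝒯 then T₁ ∪ T₂ ∈ 𝒯); and (iii) if T₁ and T₂ are disjoint subsets of S with T₁ ∈ 𝒯 and T₁ ∪ T₂ ∈ 𝒯, and for every proper subset U of T₁ either U ∈ 𝒯 or T₁ ∖ U ∈ 𝒯, then T₂ ∈ 𝒯. -/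
/-- A collection `𝒯` of subsets of `S` is a *transfer system* on `S` if there exists an
equivalence relation `∼` on the subsets of `S` such that for every `T ⊆ S`:
`T ∈ 𝒯` if and only if for every `U ⊆ S ∖ T` one has `U ∼ U ∪ T`. -/
def IsTransferSystem {S : Type*} (𝒯 : Set (Set S)) : Prop :=
  ∃ r : Set S → Set S → Prop, Equivalence r ∧
    ∀ T : Set S, T ∈ 𝒯 ↔ ∀ U : Set S, U ⊆ Tᶜ → r U (U ∪ T)

/-- A collection `𝒯` of subsets of `S` is a *pre-transfer system* on `S` if:
(i) `∅ ∈ 𝒯`; (ii) whenever `T₁, T₂ ∈ 𝒯` and `T₁ ∩ T₂ ∈ 𝒯`, then `T₁ ∪ T₂ ∈ 𝒯`;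
(iii) whenever `T₁, T₂ ⊆ S` are disjoint, `T₁ ∈ 𝒯`, `T₁ ∪ T₂ ∈ 𝒯`, and for every
proper subset `U` of `T₁` either `U ∈ 𝒯` or `T₁ \ U ∈ 𝒯`, then `T₂ ∈ 𝒯`. -/
def IsPreTransferSystem {S : Type*} (𝒯 : Set (Set S)) : Prop :=
  ∅ ∈ 𝒯 ∧
  (∀ T₁ T₂ : Set S, T₁ ∈ 𝒯 → T₂ ∈ 𝒯 → T₁ ∩ T₂ ∈ 𝒯 → T₁ ∪ T₂ ∈ 𝒯) ∧
  (∀ T₁ T₂ : Set S, Disjoint T₁ T₂ → T₁ ∈ 𝒯 → T₁ ∪ T₂ ∈ 𝒯 →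
    (∀ U : Set S, U ⊂ T₁ → U ∈ 𝒯 ∨ T₁ \ U ∈ 𝒯) → T₂ ∈ 𝒯)

/-!
An equivalence relation on `Set S` is the kernel of its quotient map `f`, so a transfer system
is the collection of sets `T` that are negligible for some function `f`: `f (U ∪ T) = f U`
whenever `U` misses `T`, or equivalently `f (A ∪ T) = f (A \ T)` for every `A`. Each axiom of a
pre-transfer system is then a short chain of such equalities, in which a set is alternately
enlarged and shrunk by negligible sets until it reaches its target.
-/

section

open Set

universe u

variable {S α : Type*}

def IsNegligible (f : Set S → α) (T : Set S) : Prop :=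
  ∀ U, U ⊆ Tᶜ → f (U ∪ T) = f U

theorem IsTransferSystem.exists_eq_setOf_isNegligible {S : Type u} {𝒯 : Set (Set S)}
    (h : IsTransferSystem 𝒯) : ∃ (β : Type u) (f : Set S → β), 𝒯 = {T | IsNegligible f T} := by
  obtain ⟨r, hr, h𝒯⟩ := h
  let s : Setoid (Set S) := ⟨r, hr⟩
  refine ⟨Quotient s, Quotient.mk s, Set.ext fun T => ?_⟩
  simp only [h𝒯, mem_ofPred_eq, IsNegligible, Quotient.eq]
  exact forall₂_congr fun U _ => ⟨s.symm, s.symm⟩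

namespace IsNegligible

variable {f : Set S → α} {T T₁ T₂ U : Set S}

theorem apply_union_eq_apply_sdiff (h : IsNegligible f T) (A : Set S) :
    f (A ∪ T) = f (A \ T) := by
  rw [← sdiff_union_self]
  exact h _ fun _ hx => hx.2

theorem empty : IsNegligible f (∅ : Set S) :=
  fun U _ => by rw [union_empty]

theorem union (h₁ : IsNegligible f T₁) (h₂ : IsNegligible f T₂)
    (hinter : IsNegligible f (T₁ ∩ T₂)) : IsNegligible f (T₁ ∪ T₂) := by
  intro U hU
  calc f (U ∪ (T₁ ∪ T₂))
      = f ((U ∪ T₁) ∪ T₂) := by rw [union_assoc]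
    _ = f ((U ∪ T₁) \ T₂) := h₂.apply_union_eq_apply_sdiff _
    _ = f ((U ∪ T₁) \ (T₁ ∩ T₂)) := by congr 1; ext; grind
    _ = f ((U ∪ T₁) ∪ (T₁ ∩ T₂)) := (hinter.apply_union_eq_apply_sdiff _).symm
    _ = f (U ∪ T₁) := by congr 1; ext; grind
    _ = f U := h₁ U (by grind)

theorem apply_union_eq_of_isNegligible_inter (hd : Disjoint T₁ T₂) (h₁ : IsNegligible f T₁)
    (h₁₂ : IsNegligible f (T₁ ∪ T₂)) (hU : U ⊆ T₂ᶜ) (hW : IsNegligible f (U ∩ T₁)) :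
    f (U ∪ T₂) = f U :=
  calc f (U ∪ T₂)
      = f ((U ∪ T₂) ∪ (U ∩ T₁)) := by congr 1; ext; grind
    _ = f ((U ∪ T₂) \ (U ∩ T₁)) := hW.apply_union_eq_apply_sdiff _
    _ = f ((U ∪ T₂) \ T₁) := by congr 1; ext; grind
    _ = f ((U ∪ T₂) ∪ T₁) := (h₁.apply_union_eq_apply_sdiff _).symm
    _ = f ((U \ T₁) ∪ (T₁ ∪ T₂)) := by congr 1; ext; grind
    _ = f (U \ T₁) := h₁₂ _ (by grind)
    _ = f (U \ (U ∩ T₁)) := by rw [sdiff_self_inter]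
    _ = f (U ∪ (U ∩ T₁)) := (hW.apply_union_eq_apply_sdiff _).symm
    _ = f U := by rw [union_eq_left.mpr inter_subset_left]

theorem apply_union_eq_of_isNegligible_sdiff (hd : Disjoint T₁ T₂) (h₁ : IsNegligible f T₁)
    (h₁₂ : IsNegligible f (T₁ ∪ T₂)) (hU : U ⊆ T₂ᶜ) (hD : IsNegligible f (T₁ \ U)) :
    f (U ∪ T₂) = f U :=
  calc f (U ∪ T₂)
      = f ((U ∪ T₂) \ (T₁ \ U)) := by congr 1; ext; grind
    _ = f ((U ∪ T₂) ∪ (T₁ \ U)) := (hD.apply_union_eq_apply_sdiff _).symm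
    _ = f ((U \ T₁) ∪ (T₁ ∪ T₂)) := by congr 1; ext; grind
    _ = f (U \ T₁) := h₁₂ _ (by grind)
    _ = f (U ∪ T₁) := (h₁.apply_union_eq_apply_sdiff U).symm
    _ = f (U ∪ (T₁ \ U)) := by rw [union_sdiff_self]
    _ = f U := hD U (by grind)

theorem of_union (hd : Disjoint T₁ T₂) (h₁ : IsNegligible f T₁)
    (h₁₂ : IsNegligible f (T₁ ∪ T₂))
    (hsplit : ∀ U, U ⊂ T₁ → IsNegligible f U ∨ IsNegligible f (T₁ \ U)) :
    IsNegligible f T₂ := by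
  intro U hU
  rcases (inter_subset_right : U ∩ T₁ ⊆ T₁).eq_or_ssubset with hW | hW
  · exact apply_union_eq_of_isNegligible_inter hd h₁ h₁₂ hU (by rwa [hW])
  rcases hsplit _ hW with hW | hD
  · exact apply_union_eq_of_isNegligible_inter hd h₁ h₁₂ hU hW
  · rw [sdiff_inter_self_eq_sdiff] at hD
    exact apply_union_eq_of_isNegligible_sdiff hd h₁ h₁₂ hU hD

end IsNegligible

end

/-- Every transfer system on `S` is a pre-transfer system on `S`; in particular
(as a special case of condition (ii) together with (i)), if `T₁, T₂ ∈ 𝒯` are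
disjoint then `T₁ ∪ T₂ ∈ 𝒯`. -/
theorem isPreTransferSystem_of_isTransferSystem {S : Type*} (𝒯 : Set (Set S))
    (h : IsTransferSystem 𝒯) :
    IsPreTransferSystem 𝒯 ∧
    (∀ T₁ T₂ : Set S, T₁ ∩ T₂ = ∅ → T₁ ∈ 𝒯 → T₂ ∈ 𝒯 → T₁ ∪ T₂ ∈ 𝒯) := by
  obtain ⟨β, f, rfl⟩ := h.exists_eq_setOf_isNegligible
  refine ⟨⟨IsNegligible.empty, fun _ _ => IsNegligible.union,
    fun _ _ => IsNegligible.of_union⟩, fun T₁ T₂ hdisj h₁ h₂ => ?_⟩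
  exact IsNegligible.union h₁ h₂ (show IsNegligible f (T₁ ∩ T₂) from hdisj ▸ IsNegligible.empty)
end

section
/- Let S be a finite set with at least two elements and let V ⊆ S. Then 𝒯(V) is a pre-transfer system on S if and only if V does not have exactly one element. -/
/-- For `V ⊆ S`, the collection `𝒯(V) = {∅} ∪ {A ⊆ S : V ⊆ A}`. -/
def principalSystem {S : Type*} (V : Set S) : Set (Set S) :=
  {A : Set S | A = ∅ ∨ V ⊆ A}

/-
The empty set and the supersets of `V` are closed under unions, so only axiom (iii) can fail.
If `V = {v}` it fails for `T₁ = {v}` and `T₂ = {w}` with `w ≠ v`: every proper subset of `{v}`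
is `∅ ∈ 𝒯(V)`, yet `{w} ∉ 𝒯(V)`. If `V` has two points `v ≠ w`, then every nonempty `T₁ ∈ 𝒯(V)`
splits as `(T₁ \ {v}) ∪ {v}` with neither piece in `𝒯(V)`, so the premise of (iii) only holds
for `T₁ = ∅`, where (iii) is trivial; and for `V = ∅` every set lies in `𝒯(V)`.
-/

namespace principalSystem

variable {S : Type*} {V A B : Set S}

lemma empty_mem : (∅ : Set S) ∈ principalSystem V := Or.inl rfl

lemma mem_of_subset (h : V ⊆ A) : A ∈ principalSystem V := Or.inr h

lemma mem_iff_subset_of_nonempty (hA : A.Nonempty) : A ∈ principalSystem V ↔ V ⊆ A :=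
  or_iff_right hA.ne_empty

lemma union_mem (hA : A ∈ principalSystem V) (hB : B ∈ principalSystem V) :
    A ∪ B ∈ principalSystem V := by
  rcases hA with rfl | hA
  · simpa using hB
  · exact mem_of_subset (hA.trans Set.subset_union_left)

lemma eq_univ_of_empty : principalSystem (∅ : Set S) = Set.univ :=
  Set.eq_univ_of_forall fun _ ↦ mem_of_subset (Set.empty_subset _)

lemma exists_ssubset_not_mem_not_mem_sdiff (hV : V.Nontrivial) (hA : V ⊆ A) :
    ∃ U ⊂ A, U ∉ principalSystem V ∧ A \ U ∉ principalSystem V := by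
  obtain ⟨v, hv, w, hw, hvw⟩ := hV
  have hwU : w ∈ A \ {v} := ⟨hA hw, hvw.symm⟩
  refine ⟨A \ {v}, Set.sdiff_singleton_ssubset.mpr (hA hv), ?_, ?_⟩
  · rw [mem_iff_subset_of_nonempty ⟨w, hwU⟩]
    exact fun h ↦ (h hv).2 rfl
  · rw [Set.sdiff_sdiff_cancel_left (Set.singleton_subset_iff.mpr (hA hv)),
      mem_iff_subset_of_nonempty (Set.singleton_nonempty v)]
    exact fun h ↦ hvw (h hw).symm

lemma isPreTransferSystem_of_eq_empty_or_nontrivial (hV : V = ∅ ∨ V.Nontrivial) :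
    IsPreTransferSystem (principalSystem V) := by
  refine ⟨empty_mem, fun T₁ T₂ h₁ h₂ _ ↦ union_mem h₁ h₂, ?_⟩
  rintro T₁ T₂ - (rfl | hT₁) h₁₂ hsplit
  · simpa using h₁₂
  · rcases hV with rfl | hV
    · exact eq_univ_of_empty ▸ Set.mem_univ T₂
    · obtain ⟨U, hU, hU_not, hdiff_not⟩ := exists_ssubset_not_mem_not_mem_sdiff hV hT₁
      exact ((hsplit U hU).elim hU_not hdiff_not).elim

lemma not_isPreTransferSystem_singleton {v w : S} (hvw : w ≠ v) :
    ¬IsPreTransferSystem (principalSystem {v}) := by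
  rintro ⟨-, -, hcancel⟩
  have hw : {w} ∈ principalSystem {v} := by
    refine hcancel {v} {w} (Set.disjoint_singleton.mpr hvw.symm) (mem_of_subset subset_rfl)
      (mem_of_subset Set.subset_union_left) fun U hU ↦ Or.inl (Or.inl ?_)
    exact Set.ssubset_singleton_iff.mp hU
  rw [mem_iff_subset_of_nonempty (Set.singleton_nonempty w), Set.singleton_subset_iff] at hw
  exact hvw hw.symm

end principalSystem

theorem principalSystem_isPreTransferSystem_iff_general {S : Type*}
    (hS : 2 ≤ Nat.card S) (V : Set S) :
    IsPreTransferSystem (principalSystem V) ↔ ¬(∃ v : S, V = {v}) := by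
  have := Nat.finite_of_card_ne_zero (by omega : Nat.card S ≠ 0)
  have := Finite.one_lt_card_iff_nontrivial.mp hS
  constructor
  · rintro h ⟨v, rfl⟩
    obtain ⟨w, hw⟩ := exists_ne v
    exact principalSystem.not_isPreTransferSystem_singleton hw h
  · intro hV
    refine principalSystem.isPreTransferSystem_of_eq_empty_or_nontrivial ?_
    rcases V.subsingleton_or_nontrivial with hsub | hnt
    · rcases hsub.eq_empty_or_singleton with hempty | hsingle
      · exact Or.inl hempty
      · exact (hV hsingle).elim
    · exact Or.inr hnt

/-- Let `S` be a finite set with at least two elements and `V ⊆ S`. Then `𝒯(V)` is a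
pre-transfer system on `S` if and only if `V` does not have exactly one element. -/
theorem principalSystem_isPreTransferSystem_iff {S : Type*} [Finite S]
    (hS : 2 ≤ Nat.card S) (V : Set S) :
    IsPreTransferSystem (principalSystem V) ↔ ¬(∃ v : S, V = {v}) :=
  principalSystem_isPreTransferSystem_iff_general hS V
end

section
/- Let S be a finite set with at least two elements and let V ⊆ S be a subset that is not a singleton (so that 𝒯(V) is a principal pre-transfer system on S). Then 𝒯(V) is a transfer system on S; that is, there exists an equivalence relation ∼ on the subsets of S such that for every T ⊆ S, T ∈ 𝒯(V) if and only if for every U ⊆ S ∖ T one has U ∼ U ∪ T. -/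
/-!
The relation identifies all subsets of `S` that are disjoint from `V` or contain `V`, and
nothing else. If `V ⊆ T`, then every `U ⊆ Tᶜ` misses `V` while `U ∪ T` contains it, so
`U ∼ U ∪ T`. Conversely, `∅ ∼ T` forces `T = ∅`, `V ⊆ T` or `T` disjoint from `V`; in the
last case, with `T ≠ ∅` and some `v ∈ V`, the relation `{v} ∼ {v} ∪ T` can only hold if
`V ⊆ {v}`, i.e. `V = {v}`.
-/

def IdentifyWhere {α : Type*} (p : α → Prop) (a b : α) : Prop :=
  a = b ∨ (p a ∧ p b)

theorem equivalence_identifyWhere {α : Type*} (p : α → Prop) :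
    Equivalence (IdentifyWhere p) where
  refl _ := Or.inl rfl
  symm := by
    rintro a b (rfl | ⟨ha, hb⟩)
    · exact Or.inl rfl
    · exact Or.inr ⟨hb, ha⟩
  trans := by
    rintro a b c (rfl | ⟨ha, hb⟩) (rfl | ⟨hb', hc⟩)
    · exact Or.inl rfl
    · exact Or.inr ⟨hb', hc⟩
    · exact Or.inr ⟨ha, hb⟩
    · exact Or.inr ⟨ha, hc⟩

section Principal

variable {S : Type*} {V T : Set S}

def DisjointOrContains (V A : Set S) : Prop :=
  Disjoint A V ∨ V ⊆ A

theorem identifyWhere_union_of_mem_principalSystem (hT : T ∈ principalSystem V)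
    (U : Set S) (hU : U ⊆ Tᶜ) : IdentifyWhere (DisjointOrContains V) U (U ∪ T) := by
  rcases hT with rfl | hVT
  · exact Or.inl (Set.union_empty U).symm
  · have hUV : Disjoint U V := (Set.subset_compl_iff_disjoint_right.mp hU).mono_right hVT
    exact Or.inr ⟨Or.inl hUV, Or.inr (hVT.trans Set.subset_union_right)⟩

theorem mem_principalSystem_of_identifyWhere_union (hV : ¬∃ v : S, V = {v})
    (h : ∀ U : Set S, U ⊆ Tᶜ → IdentifyWhere (DisjointOrContains V) U (U ∪ T)) :
    T ∈ principalSystem V := by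
  obtain hT | ⟨-, hT | hVT⟩ := h ∅ (Set.empty_subset _)
  · exact Or.inl (Set.empty_union T ▸ hT).symm
  · rw [Set.empty_union] at hT
    obtain rfl | ⟨v, hv⟩ := V.eq_empty_or_nonempty
    · exact Or.inr (Set.empty_subset T)
    have hvT : v ∉ T := fun hvT => Set.disjoint_left.mp hT hvT hv
    obtain hvvT | ⟨hvV | hVv, -⟩ := h {v} (Set.singleton_subset_iff.mpr hvT)
    · refine Or.inl (Set.eq_empty_of_forall_notMem fun t ht => ?_)
      have htv : t ∈ ({v} : Set S) := hvvT ▸ Set.mem_union_right _ ht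
      exact hvT (Set.mem_singleton_iff.mp htv ▸ ht)
    · exact absurd hv (Set.disjoint_singleton_left.mp hvV)
    · exact absurd ⟨v, Set.Subset.antisymm hVv (Set.singleton_subset_iff.mpr hv)⟩ hV
  · exact Or.inr (Set.empty_union T ▸ hVT)

end Principal

theorem principalSystem_isTransferSystem_general {S : Type*}
    (V : Set S) (hV : ¬(∃ v : S, V = {v})) :
    IsTransferSystem (principalSystem V) :=
  ⟨IdentifyWhere (DisjointOrContains V), equivalence_identifyWhere _, fun _ =>
    ⟨identifyWhere_union_of_mem_principalSystem, mem_principalSystem_of_identifyWhere_union hV⟩⟩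

/-- Let `S` be a finite set with at least two elements and `V ⊆ S` a subset that is not
a singleton (so that `𝒯(V)` is a principal pre-transfer system on `S`). Then `𝒯(V)` is
a transfer system on `S`. -/
theorem principalSystem_isTransferSystem {S : Type*} [Finite S]
    (hS : 2 ≤ Nat.card S) (V : Set S) (hV : ¬(∃ v : S, V = {v})) :
    IsTransferSystem (principalSystem V) :=
  principalSystem_isTransferSystem_general V hV
end

section
/- Let n ≥ 2 and 2 ≤ m ≤ n. Let A be the multiplicative semigroup of positive integers, let p₁ < p₂ < ⋯ < p_n be the first n prime numbers, let M = p₁·p₂·⋯·p_m, and let B be the subsemigroup of A consisting of all positive multiples of M. Call a subset T ⊆ {1,…,n} transferable if for every partition {1,…,n} = S₁ ⊔ T ⊔ S₂, every commutative semigroup C, and all semigroup homomorphisms f, g : A → C with f|_B = g|_B, one has (∏_{i ∈ S₁ ∪ T} f(p_i))·(∏_{j ∈ S₂} g(p_j)) = (∏_{i ∈ S₁} f(p_i))·(∏_{j ∈ T ∪ S₂} g(p_j)). Then T is transferable if and only if T = ∅ or {1,…,m} ⊆ T. -/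
/-!
If `M ∣ ∏_{i ∈ T} p_i`, then `f` and `g` agree on that product; after adjoining a unit to `C`
the two mixed words factor as `F(S₁) F(T) G(S₂)` and `F(S₁) G(T) G(S₂)`, where `F`, `G` are
products of the letters `f (p_i)`, `g (p_j)`, so they coincide.

Conversely, if `T ≠ ∅` misses some `i₀ < m`, take `C = (Prop, ∨)`, `f x := p_{i₀} ∣ x` and
`g x := (some prime other than p_{i₀} divides x)`. Since `m ≥ 2`, both hold on every multiple
of `M`, but the mixed word over `σ` is false exactly when `σ = {i₀}ᶜ`; this separates
`S₁ ∪ T = {i₀}ᶜ` from `S₁ = (T ∪ {i₀})ᶜ`.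
-/

universe u

/-- The mixed word `W^{f,g}_{σ, σᶜ}` for the word `W(y₁,…,y_n) = y₁⋯y_n` evaluated at
the tuple `P`: the product, over all `n` indices, of `f (P i)` for `i ∈ σ` and
`g (P j)` for `j ∉ σ`. Since a semigroup need not have a unit, possibly-empty
subproducts are collapsed using the homomorphism property: if `σ = ∅` the value is
`g (∏ i, P i)`, if `σ` is everything it is `f (∏ i, P i)`, and otherwise it is
`f (∏ i ∈ σ, P i) * g (∏ j ∈ σᶜ, P j)`. -/
def mixedWord {C : Type u} [Semigroup C] {n : ℕ} (f g : ℕ+ →ₙ* C)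
    (P : Fin n → ℕ+) (σ : Finset (Fin n)) : C :=
  if σ = ∅ then g (∏ i, P i)
  else if σᶜ = ∅ then f (∏ i, P i)
  else f (∏ i ∈ σ, P i) * g (∏ j ∈ σᶜ, P j)

open Finset

theorem map_finset_prod_of_nonempty {ι M N F : Type*} [CommMonoid M] [CommMonoid N]
    [FunLike F M N] [MulHomClass F M N] (φ : F) {s : Finset ι} (hs : s.Nonempty) (h : ι → M) :
    φ (∏ i ∈ s, h i) = ∏ i ∈ s, φ (h i) := by
  rw [prod_eq_multiset_prod, map_multiset_ne_zero_prod φ (by simpa using hs.ne_empty),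
    Multiset.map_map, prod_eq_multiset_prod]
  rfl

theorem PNat.coe_finset_prod {ι : Type*} (s : Finset ι) (h : ι → ℕ+) :
    ((∏ i ∈ s, h i : ℕ+) : ℕ) = ∏ i ∈ s, (h i : ℕ) :=
  map_prod PNat.coeMonoidHom h s

theorem WithOne.coe_map_prod_of_nonempty {ι M C : Type*} [CommMonoid M] [CommSemigroup C]
    (φ : M →ₙ* C) {s : Finset ι} (hs : s.Nonempty) (h : ι → M) :
    ((φ (∏ i ∈ s, h i) : C) : WithOne C) = ∏ i ∈ s, (φ (h i) : WithOne C) :=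
  map_finset_prod_of_nonempty (WithOne.coeMulHom.comp φ) hs h

section MixedWord

variable {C : Type u} {n : ℕ} (P : Fin n → ℕ+)

theorem coe_mixedWord [CommSemigroup C] [NeZero n] (f g : ℕ+ →ₙ* C) (σ : Finset (Fin n)) :
    ((mixedWord f g P σ : C) : WithOne C) =
      (∏ i ∈ σ, (f (P i) : WithOne C)) * ∏ j ∈ σᶜ, (g (P j) : WithOne C) := by
  unfold mixedWord
  split_ifs with hσ hσc
  · simp [hσ, WithOne.coe_map_prod_of_nonempty g univ_nonempty P]
  · simp [(compl_eq_empty_iff σ).1 hσc, WithOne.coe_map_prod_of_nonempty f univ_nonempty P]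
  · rw [WithOne.coe_mul, WithOne.coe_map_prod_of_nonempty f (nonempty_iff_ne_empty.2 hσ) P,
      WithOne.coe_map_prod_of_nonempty g (nonempty_iff_ne_empty.2 hσc) P]

theorem mixedWord_union_eq_of_map_prod_eq [CommSemigroup C] (f g : ℕ+ →ₙ* C)
    {S T : Finset (Fin n)} (hST : Disjoint S T) (hT : T.Nonempty)
    (hfg : f (∏ i ∈ T, P i) = g (∏ i ∈ T, P i)) :
    mixedWord f g P (S ∪ T) = mixedWord f g P S := by
  have : NeZero n := NeZero.of_pos hT.choose.pos
  have hswap : ∏ i ∈ T, (f (P i) : WithOne C) = ∏ i ∈ T, (g (P i) : WithOne C) := by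
    rw [← WithOne.coe_map_prod_of_nonempty f hT P, hfg, WithOne.coe_map_prod_of_nonempty g hT P]
  have hcompl : Sᶜ \ T = (S ∪ T)ᶜ := by rw [compl_union, sdiff_eq_inter_compl]
  apply WithOne.coe_injective
  rw [coe_mixedWord, coe_mixedWord, prod_union hST, hswap,
    ← prod_sdiff (subset_compl_iff_disjoint_left.2 hST), hcompl]
  ac_rfl

theorem mixedWord_coe_monoidHom [CommMonoid C] (f g : ℕ+ →* C) (σ : Finset (Fin n)) :
    mixedWord (f : ℕ+ →ₙ* C) g P σ = f (∏ i ∈ σ, P i) * g (∏ j ∈ σᶜ, P j) := by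
  unfold mixedWord
  split_ifs with hσ hσc
  · simp [hσ]
  · simp [(compl_eq_empty_iff σ).1 hσc]
  · rfl

end MixedWord

instance : CommMonoid (ULift.{u} Prop) where
  mul a b := ⟨a.down ∨ b.down⟩
  one := ⟨False⟩
  mul_assoc _ _ _ := congrArg ULift.up (propext or_assoc)
  one_mul _ := congrArg ULift.up (false_or _)
  mul_one _ := congrArg ULift.up (or_false _)
  mul_comm _ _ := congrArg ULift.up (propext or_comm)

theorem ULift.down_mul_prop (a b : ULift.{u} Prop) : (a * b).down = (a.down ∨ b.down) := rfl

def hasPrimeFactorInHom (s : Set ℕ) : ℕ+ →* ULift.{u} Prop where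
  toFun x := ⟨∃ q ∈ s, q.Prime ∧ q ∣ (x : ℕ)⟩
  map_one' := by
    ext
    simp only [PNat.one_coe, Nat.dvd_one]
    exact ⟨fun ⟨q, _, hq, hq1⟩ => hq.ne_one hq1, False.elim⟩
  map_mul' x y := by
    ext
    simp only [PNat.mul_coe, ULift.down_mul_prop]
    constructor
    · rintro ⟨q, hs, hq, hxy⟩
      exact (hq.dvd_mul.1 hxy).imp (fun h => ⟨q, hs, hq, h⟩) (fun h => ⟨q, hs, hq, h⟩)
    · rintro (⟨q, hs, hq, h⟩ | ⟨q, hs, hq, h⟩)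
      exacts [⟨q, hs, hq, h.mul_right _⟩, ⟨q, hs, hq, h.mul_left _⟩]

theorem hasPrimeFactorInHom_prod_iff {n : ℕ} {P : Fin n → ℕ+} (hP : ∀ i, (P i : ℕ).Prime)
    (s : Set ℕ) (σ : Finset (Fin n)) :
    (hasPrimeFactorInHom.{u} s (∏ i ∈ σ, P i)).down ↔ ∃ i ∈ σ, (P i : ℕ) ∈ s := by
  change (∃ q ∈ s, q.Prime ∧ q ∣ ((∏ i ∈ σ, P i : ℕ+) : ℕ)) ↔ _
  simp_rw [PNat.coe_finset_prod]
  constructor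
  · rintro ⟨q, hs, hq, hdvd⟩
    obtain ⟨i, hi, hqi⟩ := (hq.prime.dvd_finsetProd_iff _).1 hdvd
    exact ⟨i, hi, (Nat.prime_dvd_prime_iff_eq hq (hP i)).1 hqi ▸ hs⟩
  · rintro ⟨i, hi, hs⟩
    exact ⟨P i, hs, hP i, dvd_prod_of_mem _ hi⟩

theorem mixedWord_hasPrimeFactorInHom_iff {n : ℕ} {P : Fin n → ℕ+} (hP : ∀ i, (P i : ℕ).Prime)
    (hinj : Function.Injective P) (i₀ : Fin n) (σ : Finset (Fin n)) :
    (mixedWord (hasPrimeFactorInHom.{u} {(P i₀ : ℕ)} : ℕ+ →ₙ* ULift.{u} Prop)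
      (hasPrimeFactorInHom {(P i₀ : ℕ)}ᶜ) P σ).down ↔ σ ≠ {i₀}ᶜ := by
  rw [mixedWord_coe_monoidHom, ULift.down_mul_prop, hasPrimeFactorInHom_prod_iff hP,
    hasPrimeFactorInHom_prod_iff hP]
  simp only [Set.mem_singleton_iff, Set.mem_compl_iff, PNat.coe_inj, hinj.eq_iff, ne_eq,
    Finset.ext_iff, mem_compl, mem_singleton]
  grind

def IsTransferable {n : ℕ} (M : ℕ+) (P : Fin n → ℕ+) (T : Finset (Fin n)) : Prop :=
  ∀ S₁ S₂ : Finset (Fin n), Disjoint S₁ T → Disjoint S₁ S₂ → Disjoint T S₂ →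
    S₁ ∪ T ∪ S₂ = Finset.univ →
    ∀ (C : Type u) [CommSemigroup C], ∀ f g : ℕ+ →ₙ* C,
      (∀ b : ℕ+, M ∣ b → f b = g b) →
      mixedWord f g P (S₁ ∪ T) = mixedWord f g P S₁

section IsTransferable

variable {n : ℕ} {M : ℕ+} {P : Fin n → ℕ+} {T : Finset (Fin n)}

theorem isTransferable_empty : IsTransferable.{u} M P ∅ := by
  intro S₁ _ _ _ _ _ _ _ _ _ _
  rw [union_empty]

theorem isTransferable_of_dvd_prod (hT : T.Nonempty) (hM : M ∣ ∏ i ∈ T, P i) :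
    IsTransferable.{u} M P T :=
  fun _ _ hS₁T _ _ _ _ _ f g hfg => mixedWord_union_eq_of_map_prod_eq P f g hS₁T hT (hfg _ hM)

theorem IsTransferable.mem_of_dvd (h : IsTransferable.{u} M P T) (hT : T.Nonempty)
    (hP : ∀ i, (P i : ℕ).Prime) (hinj : Function.Injective P) {i₀ : Fin n}
    (hi₀ : (P i₀ : ℕ) ∣ M) {q : ℕ} (hq : q.Prime) (hqi₀ : q ≠ P i₀) (hqM : q ∣ M) :
    i₀ ∈ T := by
  by_contra hi₀T
  set S := (insert i₀ T)ᶜ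
  have hST : S ∪ T = {i₀}ᶜ := by
    ext i
    simp only [S, mem_union, mem_compl, mem_insert, mem_singleton]
    grind
  have hS : S ≠ {i₀}ᶜ := by
    obtain ⟨j, hj⟩ := hT
    rw [← hST]
    intro hS
    have hjS : j ∈ S := by rw [hS]; exact mem_union_right S hj
    simp [S, hj] at hjS
  have hfg : ∀ b : ℕ+, M ∣ b →
      hasPrimeFactorInHom.{u} {(P i₀ : ℕ)} b = hasPrimeFactorInHom {(P i₀ : ℕ)}ᶜ b := by
    intro b hb
    have hb : (M : ℕ) ∣ b := PNat.dvd_iff.1 hb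
    exact ULift.ext _ _ (propext (iff_of_true ⟨_, rfl, hP i₀, hi₀.trans hb⟩
      ⟨q, hqi₀, hq, hqM.trans hb⟩))
  have hword := h S {i₀} (disjoint_compl_left.mono_right (subset_insert _ _))
    (disjoint_compl_left.mono_right (by simp)) (disjoint_singleton_right.2 hi₀T)
    (by rw [hST]; simp) (ULift.{u} Prop)
    (hasPrimeFactorInHom {(P i₀ : ℕ)} : ℕ+ →ₙ* ULift.{u} Prop)
    (hasPrimeFactorInHom {(P i₀ : ℕ)}ᶜ) hfg
  exact (mixedWord_hasPrimeFactorInHom_iff hP hinj i₀ (S ∪ T)).1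
    (hword ▸ (mixedWord_hasPrimeFactorInHom_iff hP hinj i₀ S).2 hS) hST

end IsTransferable

theorem transferable_iff_empty_or_contains_general (n m : ℕ) (hm : 2 ≤ m)
    (hmn : m ≤ n)
    (P : Fin n → ℕ+) (hP : ∀ i : Fin n, (P i : ℕ) = Nat.nth Nat.Prime (i : ℕ))
    (M : ℕ+) (hM : (M : ℕ) = ∏ i ∈ Finset.range m, Nat.nth Nat.Prime i)
    (T : Finset (Fin n)) :
    (∀ S₁ S₂ : Finset (Fin n), Disjoint S₁ T → Disjoint S₁ S₂ → Disjoint T S₂ →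
      S₁ ∪ T ∪ S₂ = Finset.univ →
      ∀ (C : Type u) [CommSemigroup C], ∀ f g : ℕ+ →ₙ* C,
        (∀ b : ℕ+, M ∣ b → f b = g b) →
        mixedWord f g P (S₁ ∪ T) = mixedWord f g P S₁)
    ↔ (T = ∅ ∨ ∀ i : Fin n, (i : ℕ) < m → i ∈ T) := by
  have hPprime (i : Fin n) : (P i : ℕ).Prime := hP i ▸ Nat.prime_nth_prime i
  have hPinj : Function.Injective P := fun i j hij =>
    Fin.ext <| Nat.nth_injective Nat.infinite_setOfPred_prime <| by rw [← hP, ← hP, hij]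
  have hPM (i : Fin n) (hi : (i : ℕ) < m) : (P i : ℕ) ∣ M :=
    hM ▸ hP i ▸ dvd_prod_of_mem _ (mem_range.2 hi)
  change IsTransferable.{u} M P T ↔ _
  constructor
  · refine fun h => or_iff_not_imp_left.2 fun hT i hi => ?_
    obtain ⟨j, hj, hji⟩ : ∃ j : Fin n, (j : ℕ) < m ∧ j ≠ i :=
      if hi0 : (i : ℕ) = 0 then ⟨⟨1, by omega⟩, hm, by rw [Ne, Fin.ext_iff, hi0]; simp⟩
      else ⟨⟨0, by omega⟩, by dsimp only; omega, by rw [Ne, Fin.ext_iff]; exact Ne.symm hi0⟩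
    exact h.mem_of_dvd (nonempty_iff_ne_empty.2 hT) hPprime hPinj (hPM i hi) (hPprime j)
      (fun hPji => hji (hPinj (PNat.coe_injective hPji))) (hPM j hj)
  · rintro (rfl | hT)
    · exact isTransferable_empty
    refine isTransferable_of_dvd_prod ⟨⟨0, by omega⟩, hT _ (by dsimp only; omega)⟩ ?_
    rw [PNat.dvd_iff, PNat.coe_finset_prod, hM,
      show ∏ i ∈ T, (P i : ℕ) = ∏ k ∈ T.map Fin.valEmbedding, Nat.nth Nat.Prime k by simp [hP]]
    exact prod_dvd_prod_of_subset _ _ _ fun k hk =>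
      mem_map.2 ⟨⟨k, (mem_range.1 hk).trans_le hmn⟩, hT _ (mem_range.1 hk), rfl⟩

/-- Let `n ≥ 2` and `2 ≤ m ≤ n`. Let `A = ℕ+` be the multiplicative semigroup of
positive integers, `P i` the `i`-th prime number (for `i < n`), `M = P 0 ⋯ P (m-1)`
the product of the first `m` primes, and `B` the subsemigroup of all positive multiples
of `M`. Call `T ⊆ {0,…,n-1}` *transferable* if for every partition
`{0,…,n-1} = S₁ ⊔ T ⊔ S₂`, every commutative semigroup `C`, and all semigroup
homomorphisms `f, g : ℕ+ → C` agreeing on `B`, one has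
`(∏_{i ∈ S₁ ∪ T} f (P i)) * (∏_{j ∈ S₂} g (P j)) =
 (∏_{i ∈ S₁} f (P i)) * (∏_{j ∈ T ∪ S₂} g (P j))`.
Then `T` is transferable if and only if `T = ∅` or `{0,…,m-1} ⊆ T`. -/
theorem transferable_iff_empty_or_contains (n m : ℕ) (hn : 2 ≤ n) (hm : 2 ≤ m)
    (hmn : m ≤ n)
    (P : Fin n → ℕ+) (hP : ∀ i : Fin n, (P i : ℕ) = Nat.nth Nat.Prime (i : ℕ))
    (M : ℕ+) (hM : (M : ℕ) = ∏ i ∈ Finset.range m, Nat.nth Nat.Prime i)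
    (T : Finset (Fin n)) :
    (∀ S₁ S₂ : Finset (Fin n), Disjoint S₁ T → Disjoint S₁ S₂ → Disjoint T S₂ →
      S₁ ∪ T ∪ S₂ = Finset.univ →
      ∀ (C : Type u) [CommSemigroup C], ∀ f g : ℕ+ →ₙ* C,
        (∀ b : ℕ+, M ∣ b → f b = g b) →
        mixedWord f g P (S₁ ∪ T) = mixedWord f g P S₁)
    ↔ (T = ∅ ∨ ∀ i : Fin n, (i : ℕ) < m → i ∈ T) :=
  transferable_iff_empty_or_contains_general n m hm hmn P hP M hM T
end
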